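/- arXiv:2409.04305 — 3 statements merged into one kernel-verified Lean document; each statement's English description precedes it below -/
import Mathlib

section
/- Let n' ≥ 1. For a noncrossing set partition π of [2n'] := {1,…,2n'} with blocks B_1,…,B_k having smallest elements a_1,…,a_k, let Λ(π) be the lattice path starting at (0,0) with 2n' steps, whose m-th step is (1, |B_i| − 1) if m = a_i for some i, and (1, −1) otherwise. Then Λ(π) is a Łukasiewicz path, and the map π ↦ Λ(π) restricts to a bijection from the set NC^even(2n') of even noncrossing set partitions of [2n'] onto the set L^odd(2n') of odd Łukasiewicz paths of length 2n'. Moreover, under this bijection: the m-th step of Λ(π) is an up step if and only if m is the smallest element of some block of π; if the m-th step of Λ(π) is a down step from an odd height 2s+1 to the even height 2s, then m is even and m is not the smallest element of any block of π; and if the m-th step is a down step from an even height 2s to the odd height 2s−1, then m is odd and m is not the smallest element of any block of π. -/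
/-!
The height of `Λ(π)` after `m` steps is the number of elements `≥ m` of the blocks whose minimum
is `< m`; hence `Λ(π)` is a Łukasiewicz path. Conversely, in a Łukasiewicz path every down step
`j` is matched with the last earlier time at which the path is lower, which is an up step;
grouping each up step with the down steps matched with it gives a noncrossing partition, and an
up step `(1, k)` is matched with exactly `k` down steps (one for each level it climbs over), so
this partition is mapped back to the path by `Λ`. For noncrossing `π` the matching sends each
element to the minimum of its block, so the two constructions are mutually inverse. Blocks of
even size correspond to odd steps, and then the height after `m` steps has the parity of `m`.
-/

open Finset

/-- A set partition of `{0,…,n-1}` (representing `[n] = {1,…,n}`) is noncrossing. -/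
def IsNoncrossing {n : ℕ} (π : Finpartition (Finset.univ : Finset (Fin n))) : Prop :=
  ∀ a b c d : Fin n, a < b → b < c → c < d →
    ∀ B₁ ∈ π.parts, ∀ B₂ ∈ π.parts,
      a ∈ B₁ → c ∈ B₁ → b ∈ B₂ → d ∈ B₂ → B₁ = B₂

/-- All blocks have even cardinality. -/
def IsEvenPartition {n : ℕ} (π : Finpartition (Finset.univ : Finset (Fin n))) : Prop :=
  ∀ B ∈ π.parts, Even B.card

/-- `m` is the smallest element of some block of `π`. -/
def IsBlockMin {n : ℕ} (π : Finpartition (Finset.univ : Finset (Fin n))) (m : Fin n) : Prop :=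
  ∃ B ∈ π.parts, m ∈ B ∧ ∀ x ∈ B, m ≤ x

open Classical in
/-- The step sequence `Λ(π)` of a set partition `π` of `[n]`: the `m`-th step is
`(1, |B|-1)` if `m` is the smallest element of the block `B`, and `(1,-1)` otherwise.
(The step `(1,j)` is recorded by its vertical displacement `j`.) -/
noncomputable def lambdaMap {n : ℕ} (π : Finpartition (Finset.univ : Finset (Fin n)))
    (m : Fin n) : ℤ :=
  if h : ∃ B ∈ π.parts, m ∈ B ∧ ∀ x ∈ B, m ≤ x then (h.choose.card : ℤ) - 1 else -1

/-- The height of the vertex of the path just before its (0-based) `m`-th step,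
i.e. the sum of the first `m` vertical displacements. -/
noncomputable def pathHeight {n : ℕ} (f : Fin n → ℤ) (m : ℕ) : ℤ :=
  ∑ i ∈ Finset.univ.filter (fun j : Fin n => (j : ℕ) < m), f i

/-- `f` is the step sequence of a Łukasiewicz path of length `n`: every step is `(1,j)` with
`j ≥ -1`, the path never goes below the x-axis, and it ends at `(n,0)`. -/
def IsLukPath {n : ℕ} (f : Fin n → ℤ) : Prop :=
  (∀ i, -1 ≤ f i) ∧ (∀ m : ℕ, m ≤ n → 0 ≤ pathHeight f m) ∧ pathHeight f n = 0

/-- `f` is the step sequence of an odd Łukasiewicz path: a Łukasiewicz path all of whose steps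
are of the form `(1, 2k-1)` for some `k ≥ 0`. -/
def IsOddLukPath {n : ℕ} (f : Fin n → ℤ) : Prop :=
  IsLukPath f ∧ ∀ i, Odd (f i)

section PathHeight

variable {n : ℕ}

lemma pathHeight_zero (f : Fin n → ℤ) : pathHeight f 0 = 0 := by
  simp [pathHeight]

lemma pathHeight_succ (f : Fin n → ℤ) {m : ℕ} (hm : m < n) :
    pathHeight f (m + 1) = pathHeight f m + f ⟨m, hm⟩ := by
  have : (univ.filter fun j : Fin n => (j : ℕ) < m + 1) =
      insert ⟨m, hm⟩ (univ.filter fun j : Fin n => (j : ℕ) < m) := by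
    ext j
    simp only [mem_filter, mem_univ, true_and, mem_insert, Fin.ext_iff]
    omega
  rw [pathHeight, this, sum_insert (by simp), add_comm]
  rfl

lemma even_pathHeight_add {f : Fin n → ℤ} (hodd : ∀ i, Odd (f i)) {m : ℕ} (hm : m ≤ n) :
    Even (pathHeight f m + m) := by
  have : pathHeight f m + m =
      ∑ i ∈ univ.filter (fun j : Fin n => (j : ℕ) < m), (f i + 1) := by
    rw [sum_add_distrib, sum_const, Fin.card_filter_val_lt, min_eq_right hm]
    simp [pathHeight]
  rw [this]
  exact even_sum _ fun i _ => (hodd i).add_one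

end PathHeight

lemma exists_first_descent_below {h : ℕ → ℤ} {a b : ℕ} {ℓ : ℤ}
    (hstep : ∀ t < b, h t - 1 ≤ h (t + 1)) (hab : a ≤ b) (ha : ℓ ≤ h a) (hb : h b < ℓ) :
    ∃ j, a ≤ j ∧ j < b ∧ h j = ℓ ∧ h (j + 1) < ℓ ∧
      ∀ t, a ≤ t → t ≤ j → ℓ ≤ h t := by
  classical
  have hex : ∃ s, a ≤ s ∧ h (s + 1) < ℓ := by
    obtain ⟨s, rfl⟩ : ∃ s, b = s + 1 := ⟨b - 1, by grind⟩
    exact ⟨s, by grind, hb⟩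
  obtain ⟨haj, hj⟩ := Nat.find_spec hex
  have hge : ∀ t, a ≤ t → t ≤ Nat.find hex → ℓ ≤ h t := by
    intro t hat htj
    rcases hat.eq_or_lt with rfl | hlt
    · exact ha
    · obtain ⟨s, rfl⟩ : ∃ s, t = s + 1 := ⟨t - 1, by omega⟩
      exact not_lt.1 fun hs => Nat.find_min hex (by omega) ⟨by omega, hs⟩
  have hjb : Nat.find hex < b := by
    by_contra! hbj
    exact (hge b hab hbj).not_gt hb
  have := hstep _ hjb
  have := hge _ haj le_rfl
  exact ⟨Nat.find hex, haj, hjb, by omega, hj, hge⟩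

lemma Finpartition.ext_part {α : Type*} [DecidableEq α] {s : Finset α} {P Q : Finpartition s}
    (h : ∀ x ∈ s, P.part x = Q.part x) : P = Q := by
  have parts_subset : ∀ P Q : Finpartition s, (∀ x ∈ s, P.part x = Q.part x) →
      P.parts ⊆ Q.parts := by
    intro P Q h B hB
    obtain ⟨x, hx⟩ := P.nonempty_of_mem_parts hB
    have hxs : x ∈ s := P.le hB hx
    rw [← P.part_eq_of_mem hB hx, h x hxs]
    exact Q.part_mem.2 hxs
  exact Finpartition.ext <| (parts_subset P Q h).antisymm
    (parts_subset Q P fun x hx => (h x hx).symm)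

namespace Finpartition

variable {n : ℕ} (π : Finpartition (univ : Finset (Fin n)))

noncomputable def blockMin (x : Fin n) : Fin n :=
  (π.part x).min' ⟨x, π.mem_part (mem_univ x)⟩

noncomputable def pending (m : ℕ) : Finset (Fin n) :=
  univ.filter fun x => (π.blockMin x : ℕ) < m ∧ m ≤ (x : ℕ)

variable {π}

lemma blockMin_mem_part (x : Fin n) : π.blockMin x ∈ π.part x :=
  min'_mem _ _

lemma blockMin_le_of_mem_part {x y : Fin n} (h : y ∈ π.part x) : π.blockMin x ≤ y :=
  min'_le _ _ h

lemma blockMin_le (x : Fin n) : π.blockMin x ≤ x :=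
  blockMin_le_of_mem_part (π.mem_part (mem_univ x))

lemma mem_part_iff_blockMin_eq {x y : Fin n} :
    y ∈ π.part x ↔ π.blockMin x = π.blockMin y := by
  rw [π.mem_part_iff_part_eq_part (mem_univ y) (mem_univ x)]
  constructor
  · intro h
    simp only [blockMin, h]
  · intro h
    have hx : π.blockMin x ∈ π.part y := h ▸ blockMin_mem_part y
    exact (π.eq_of_mem_parts (π.part_mem.2 (mem_univ x)) (π.part_mem.2 (mem_univ y))
      (blockMin_mem_part x) hx).symm

lemma blockMin_blockMin (x : Fin n) : π.blockMin (π.blockMin x) = π.blockMin x :=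
  (mem_part_iff_blockMin_eq.1 (blockMin_mem_part x)).symm

lemma isBlockMin_iff {m : Fin n} : IsBlockMin π m ↔ π.blockMin m = m := by
  constructor
  · rintro ⟨B, hB, hmB, hle⟩
    rw [← π.part_eq_of_mem hB hmB] at hle
    exact (blockMin_le m).antisymm (hle _ (blockMin_mem_part m))
  · intro h
    exact ⟨π.part m, π.part_mem.2 (mem_univ m), π.mem_part (mem_univ m),
      fun x hx => h ▸ blockMin_le_of_mem_part hx⟩

end Finpartition

open Finpartition

section PartitionToPath

variable {n : ℕ} {π : Finpartition (univ : Finset (Fin n))}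

lemma lambdaMap_of_isBlockMin {m : Fin n} (h : IsBlockMin π m) :
    lambdaMap π m = #(π.part m) - 1 := by
  unfold IsBlockMin at h
  rw [lambdaMap, dif_pos h]
  obtain ⟨hB, hmB, -⟩ := h.choose_spec
  rw [π.part_eq_of_mem hB hmB]

lemma lambdaMap_of_not_isBlockMin {m : Fin n} (h : ¬ IsBlockMin π m) : lambdaMap π m = -1 :=
  dif_neg h

variable (π) in
lemma lambdaMap_add_one (m : Fin n) : lambdaMap π m + 1 = #{x | π.blockMin x = m} := by
  by_cases h : IsBlockMin π m
  · have hfiber : ({x | π.blockMin x = m} : Finset (Fin n)) = π.part m := by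
      ext x
      rw [mem_filter, mem_part_iff_blockMin_eq, isBlockMin_iff.1 h, eq_comm]
      simp
    rw [hfiber, lambdaMap_of_isBlockMin h]
    ring
  · have hfiber : ({x | π.blockMin x = m} : Finset (Fin n)) = ∅ := by
      refine filter_eq_empty_iff.2 fun x _ hx => h (isBlockMin_iff.2 ?_)
      rw [← hx, blockMin_blockMin]
    rw [hfiber, lambdaMap_of_not_isBlockMin h]
    simp

lemma pathHeight_lambdaMap {m : ℕ} (hm : m ≤ n) :
    pathHeight (lambdaMap π) m = #(π.pending m) := by
  let before : Finset (Fin n) := univ.filter fun x => (x : ℕ) < m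
  have hsplit : #(univ.filter fun x => (π.blockMin x : ℕ) < m) = m + #(π.pending m) := by
    have : (univ.filter fun x => (π.blockMin x : ℕ) < m) = before ∪ π.pending m := by
      ext x
      have := Fin.le_def.1 (blockMin_le (π := π) x)
      simp only [before, pending, mem_filter, mem_univ, true_and, mem_union]
      omega
    rw [this, card_union_of_disjoint, Fin.card_filter_val_lt, min_eq_right hm]
    exact disjoint_filter.2 fun x _ hx h => by omega
  have hfibers : #(univ.filter fun x => (π.blockMin x : ℕ) < m) =
      ∑ i ∈ before, #{x | π.blockMin x = i} := by
    rw [card_eq_sum_card_fiberwise (f := π.blockMin) (t := before)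
      fun x hx => by simpa [before] using hx]
    refine sum_congr rfl fun i hi => congrArg card (ext fun x => ?_)
    simp only [before, mem_filter, mem_univ, true_and] at hi ⊢
    exact ⟨And.right, fun hx => ⟨hx ▸ hi, hx⟩⟩
  have hsum : pathHeight (lambdaMap π) m + m = ∑ i ∈ before, (lambdaMap π i + 1) := by
    rw [sum_add_distrib, sum_const, Fin.card_filter_val_lt, min_eq_right hm]
    simp [pathHeight, before]
  simp only [lambdaMap_add_one] at hsum
  push_cast [← Nat.cast_sum, ← hfibers, hsplit] at hsum
  linarith

variable (π) in
lemma isLukPath_lambdaMap : IsLukPath (lambdaMap π) := by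
  refine ⟨fun m => ?_, fun m hm => ?_, ?_⟩
  · linarith [lambdaMap_add_one π m, (#{x | π.blockMin x = m}).cast_nonneg (α := ℤ)]
  · rw [pathHeight_lambdaMap hm]
    positivity
  · rw [pathHeight_lambdaMap le_rfl, Nat.cast_eq_zero, card_eq_zero]
    exact filter_eq_empty_iff.2 fun x _ hx => x.isLt.not_ge hx.2

variable (π) in
lemma isEvenPartition_iff_odd_lambdaMap : IsEvenPartition π ↔ ∀ m, Odd (lambdaMap π m) := by
  constructor
  · intro hev m
    by_cases h : IsBlockMin π m
    · obtain ⟨k, hk⟩ := hev _ (π.part_mem.2 (mem_univ m))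
      rw [lambdaMap_of_isBlockMin h, hk]
      exact ⟨k - 1, by push_cast; ring⟩
    · rw [lambdaMap_of_not_isBlockMin h]
      exact odd_neg_one
  · intro hodd B hB
    obtain ⟨x, hx⟩ := π.nonempty_of_mem_parts hB
    have hmin : IsBlockMin π (π.blockMin x) := isBlockMin_iff.2 (blockMin_blockMin x)
    have hpart : π.part (π.blockMin x) = B :=
      π.part_eq_of_mem hB (π.part_eq_of_mem hB hx ▸ blockMin_mem_part x)
    have hodd := hodd (π.blockMin x)
    rw [lambdaMap_of_isBlockMin hmin, hpart] at hodd
    exact_mod_cast (sub_add_cancel (#B : ℤ) 1 ▸ hodd.add_one)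

lemma one_le_lambdaMap_iff (hev : IsEvenPartition π) {m : Fin n} :
    1 ≤ lambdaMap π m ↔ IsBlockMin π m := by
  refine ⟨fun h => not_not.1 fun hm => ?_, fun hm => ?_⟩
  · rw [lambdaMap_of_not_isBlockMin hm] at h
    omega
  · obtain ⟨k, hk⟩ := hev _ (π.part_mem.2 (mem_univ m))
    have := card_pos.2 ⟨m, π.mem_part (mem_univ m)⟩
    rw [lambdaMap_of_isBlockMin hm]
    omega

lemma IsNoncrossing.blockMin_le_blockMin (hnc : IsNoncrossing π) {x y : Fin n}
    (hyx : π.blockMin y < x) (hxy : x < y) : π.blockMin y ≤ π.blockMin x := by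
  by_contra! h
  have := hnc _ _ _ _ h hyx hxy (π.part x) (π.part_mem.2 (mem_univ x)) (π.part y)
    (π.part_mem.2 (mem_univ y)) (blockMin_mem_part x) (π.mem_part (mem_univ x))
    (blockMin_mem_part y) (π.mem_part (mem_univ y))
  rw [← π.mem_part_iff_part_eq_part (mem_univ x) (mem_univ y), mem_part_iff_blockMin_eq] at this
  exact h.ne' this

lemma IsNoncrossing.pending_subset (hnc : IsNoncrossing π) {j : Fin n} {t : ℕ}
    (hjt : (π.blockMin j : ℕ) < t) (htj : t ≤ j) : π.pending j ⊆ π.pending t := by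
  intro x hx
  simp only [pending, mem_filter, mem_univ, true_and] at hx ⊢
  refine ⟨?_, htj.trans hx.2⟩
  rcases hx.2.eq_or_lt with hjx | hjx
  · rwa [← Fin.ext hjx]
  · exact (Fin.le_def.1 (hnc.blockMin_le_blockMin hx.1 hjx)).trans_lt hjt

lemma IsNoncrossing.pending_blockMin_ssubset (hnc : IsNoncrossing π) {j : Fin n}
    (hj : ¬ IsBlockMin π j) : π.pending (π.blockMin j) ⊂ π.pending j := by
  have hlt : π.blockMin j < j := (blockMin_le j).lt_of_ne (mt isBlockMin_iff.2 hj)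
  refine ssubset_iff_of_subset (fun x hx => ?_) |>.2 ⟨j, ?_, ?_⟩
  · simp only [pending, mem_filter, mem_univ, true_and] at hx ⊢
    refine ⟨hx.1.trans (Fin.lt_def.1 hlt), not_lt.1 fun hxj => ?_⟩
    have hne : π.blockMin j ≠ x := by
      rintro rfl
      rw [blockMin_blockMin] at hx
      exact hx.1.false
    have hle := hnc.blockMin_le_blockMin ((Fin.le_def.2 hx.2).lt_of_ne hne) hxj
    exact (Fin.le_def.1 hle).not_gt hx.1
  · simp [pending, hlt]
  · simp [pending]

end PartitionToPath

section PathToPartition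

variable {n : ℕ}

noncomputable def lowerBefore (f : Fin n → ℤ) (j : Fin n) : Finset (Fin n) :=
  univ.filter fun i => i < j ∧ pathHeight f i < pathHeight f j

open Classical in
/-- The up step matched with the down step `j`. -/
noncomputable def opener (f : Fin n → ℤ) (j : Fin n) : Fin n :=
  if h : f j = -1 ∧ (lowerBefore f j).Nonempty then (lowerBefore f j).max' h.2 else j

variable {f : Fin n → ℤ}

lemma pathHeight_sub_one_le (hL : IsLukPath f) {t : ℕ} (ht : t < n) :
    pathHeight f t - 1 ≤ pathHeight f (t + 1) := by
  rw [pathHeight_succ f ht]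
  linarith [hL.1 ⟨t, ht⟩]

lemma opener_of_ne {j : Fin n} (hj : f j ≠ -1) : opener f j = j :=
  dif_neg fun h => hj h.1

lemma opener_le (j : Fin n) : opener f j ≤ j := by
  unfold opener
  split_ifs with h
  · exact ((mem_filter.1 ((lowerBefore f j).max'_mem h.2)).2.1).le
  · exact le_rfl

lemma lowerBefore_nonempty (hL : IsLukPath f) {j : Fin n} (hj : f j = -1) :
    (lowerBefore f j).Nonempty := by
  have hpos : 0 < pathHeight f j := by
    have := pathHeight_succ f j.isLt
    linarith [hL.2.1 (j + 1) j.isLt]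
  have hj0 : 0 < (j : ℕ) := Nat.pos_of_ne_zero fun h => by
    rw [h, pathHeight_zero] at hpos
    exact hpos.false
  refine ⟨⟨0, j.pos⟩, ?_⟩
  simp only [lowerBefore, mem_filter, mem_univ, true_and, pathHeight_zero]
  exact ⟨Fin.lt_def.2 hj0, hpos⟩

lemma opener_spec (hL : IsLukPath f) {j : Fin n} (hj : f j = -1) :
    opener f j < j ∧ pathHeight f (opener f j) < pathHeight f j ∧
      ∀ t : ℕ, (opener f j : ℕ) < t → t ≤ j → pathHeight f j ≤ pathHeight f t := by
  have hne := lowerBefore_nonempty hL hj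
  have hop : opener f j = (lowerBefore f j).max' hne := dif_pos ⟨hj, hne⟩
  obtain ⟨hlt, hH⟩ := mem_filter.1 (hop ▸ (lowerBefore f j).max'_mem hne) |>.2
  refine ⟨hlt, hH, fun t hit htj => not_lt.1 fun ht => ?_⟩
  have htj' : t < j := htj.lt_of_ne fun h => by rw [h] at ht; exact ht.false
  have hmem : (⟨t, htj'.trans j.isLt⟩ : Fin n) ∈ lowerBefore f j := by
    simp only [lowerBefore, mem_filter, mem_univ, true_and]
    exact ⟨Fin.lt_def.2 htj', ht⟩
  exact (hop ▸ (lowerBefore f j).le_max' _ hmem).not_gt (Fin.lt_def.2 hit)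

lemma opener_eq (hL : IsLukPath f) {i j : Fin n} (hj : f j = -1) (hij : i < j)
    (hi : pathHeight f i < pathHeight f j)
    (hbetween : ∀ t : ℕ, (i : ℕ) < t → t ≤ j → pathHeight f j ≤ pathHeight f t) :
    opener f j = i := by
  obtain ⟨hoj, hoH, hobetween⟩ := opener_spec hL hj
  rcases lt_trichotomy (opener f j) i with h | h | h
  · exact absurd (hobetween i h hij.le) hi.not_ge
  · exact h
  · exact absurd (hbetween _ h hoj.le) hoH.not_ge

lemma apply_opener_ne_neg_one (hL : IsLukPath f) (j : Fin n) : f (opener f j) ≠ -1 := by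
  by_cases hj : f j = -1
  · obtain ⟨hoj, hoH, hobetween⟩ := opener_spec hL hj
    have := hobetween _ (Nat.lt_succ_self _) hoj
    rw [pathHeight_succ f (opener f j).isLt, Fin.eta] at this
    omega
  · rwa [opener_of_ne hj]

lemma opener_opener (hL : IsLukPath f) (j : Fin n) : opener f (opener f j) = opener f j :=
  opener_of_ne (apply_opener_ne_neg_one hL j)

lemma opener_le_opener (hL : IsLukPath f) {x y : Fin n} (hx : f x = -1) (hy : f y = -1)
    (hxy : x < y) (hyx : opener f y < x) : opener f y ≤ opener f x := by
  by_contra! h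
  obtain ⟨-, -, hxbetween⟩ := opener_spec hL hx
  obtain ⟨-, hyH, hybetween⟩ := opener_spec hL hy
  have h1 := hxbetween _ h hyx.le
  have h2 := hybetween (x + 1) (by omega) hxy
  rw [pathHeight_succ f x.isLt, hx] at h2
  omega

lemma pathHeight_lt_of_opener_eq (hL : IsLukPath f) {j j' : Fin n} (hj : f j = -1)
    (hj' : f j' = -1) (hjj' : j < j') (h : opener f j = opener f j') :
    pathHeight f j' < pathHeight f j := by
  have hoj := (opener_spec hL hj).1
  have := (opener_spec hL hj').2.2 (j + 1) (by rw [← h]; omega) hjj'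
  rw [pathHeight_succ f j.isLt, Fin.eta, hj] at this
  omega

lemma exists_down_opener_eq (hL : IsLukPath f) {i : Fin n} {ℓ : ℤ}
    (hℓ : ℓ ∈ Ioc (pathHeight f i) (pathHeight f i + f i)) :
    ∃ j, f j = -1 ∧ opener f j = i ∧ pathHeight f j = ℓ := by
  obtain ⟨hℓ₁, hℓ₂⟩ := mem_Ioc.1 hℓ
  have hHi : 0 ≤ pathHeight f i := hL.2.1 i i.isLt.le
  have hHi1 := pathHeight_succ f i.isLt
  rw [Fin.eta] at hHi1
  obtain ⟨j, hij, hjn, hHj, hHj1, habove⟩ :=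
    exists_first_descent_below (h := pathHeight f) (a := i + 1) (b := n) (ℓ := ℓ)
      (fun t ht => pathHeight_sub_one_le hL ht) i.isLt (by omega) (by rw [hL.2.2]; omega)
  have hfj : f ⟨j, hjn⟩ = -1 := by
    have := pathHeight_succ f hjn
    have := hL.1 ⟨j, hjn⟩
    omega
  refine ⟨⟨j, hjn⟩, hfj, opener_eq hL hfj (Fin.lt_def.2 hij) ?_ ?_, hHj⟩
  · simp only
    omega
  · exact fun t hit htj => hHj ▸ habove t hit htj

/-- The heights of the down steps matched with `i` are exactly the levels
`H i < ℓ ≤ H i + f i` climbed by the step `i`. -/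
lemma card_filter_down_opener_eq (hL : IsLukPath f) {i : Fin n} (hi : f i ≠ -1) :
    (#{j | f j = -1 ∧ opener f j = i} : ℤ) = f i := by
  have hfi : 0 ≤ f i := by have := hL.1 i; omega
  have hHi1 := pathHeight_succ f i.isLt
  rw [Fin.eta] at hHi1
  suffices #{j | f j = -1 ∧ opener f j = i} = #(Ioc (pathHeight f i) (pathHeight f i + f i)) by
    rw [this, Int.card_Ioc_of_le _ _ (by omega)]
    ring
  refine card_bij (fun j _ => pathHeight f j) (fun j hj => ?_) (fun j hj j' hj' hjj' => ?_)
    fun ℓ hℓ => ?_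
  · obtain ⟨hjd, rfl⟩ := (mem_filter.1 hj).2
    obtain ⟨hij, hH, hbetween⟩ := opener_spec hL hjd
    have := hbetween (opener f j + 1) (by omega) hij
    exact mem_Ioc.2 ⟨hH, by omega⟩
  · obtain ⟨hjd, rfl⟩ := (mem_filter.1 hj).2
    obtain ⟨hjd', hopener⟩ := (mem_filter.1 hj').2
    rcases lt_trichotomy j j' with h | h | h
    · exact absurd hjj' (pathHeight_lt_of_opener_eq hL hjd hjd' h hopener.symm).ne'
    · exact h
    · exact absurd hjj' (pathHeight_lt_of_opener_eq hL hjd' hjd h hopener).ne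
  · obtain ⟨j, hj, hopener, hH⟩ := exists_down_opener_eq hL hℓ
    exact ⟨j, mem_filter.2 ⟨mem_univ _, hj, hopener⟩, hH⟩

lemma card_filter_opener_eq (hL : IsLukPath f) (m : Fin n) :
    (#{x | opener f x = m} : ℤ) = f m + 1 := by
  by_cases hm : f m = -1
  · have hempty : ({x | opener f x = m} : Finset (Fin n)) = ∅ :=
      filter_eq_empty_iff.2 fun x _ hx => apply_opener_ne_neg_one hL x (hx ▸ hm)
    simp [hempty, hm]
  · have hfiber : ({x | opener f x = m} : Finset (Fin n)) =
        insert m ({j | f j = -1 ∧ opener f j = m} : Finset (Fin n)) := by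
      ext x
      simp only [mem_filter, mem_univ, true_and, mem_insert]
      constructor
      · intro hx
        by_cases hfx : f x = -1
        · exact Or.inr ⟨hfx, hx⟩
        · exact Or.inl (opener_of_ne hfx ▸ hx)
      · rintro (rfl | ⟨-, hx⟩)
        · exact opener_of_ne hm
        · exact hx
    rw [hfiber, card_insert_of_notMem fun h => hm (mem_filter.1 h).2.1, Nat.cast_succ,
      card_filter_down_opener_eq hL hm, add_comm]

end PathToPartition

section Bijection

variable {n : ℕ}

/-- The inverse of `Λ`. -/
noncomputable def partitionOfPath (f : Fin n → ℤ) : Finpartition (univ : Finset (Fin n)) :=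
  @Finpartition.ofSetoid _ _ _ (Setoid.ker (opener f)) (Classical.decRel _)

variable {f : Fin n → ℤ} {π : Finpartition (univ : Finset (Fin n))}

lemma mem_part_partitionOfPath {x y : Fin n} :
    y ∈ (partitionOfPath f).part x ↔ opener f x = opener f y := by
  classical
  exact Finpartition.mem_part_ofSetoid_iff_rel

lemma blockMin_partitionOfPath (hL : IsLukPath f) (x : Fin n) :
    (partitionOfPath f).blockMin x = opener f x :=
  (min'_eq_iff _ _ _).2 ⟨mem_part_partitionOfPath.2 (opener_opener hL x).symm,
    fun y hy => mem_part_partitionOfPath.1 hy ▸ opener_le y⟩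

lemma lambdaMap_partitionOfPath (hL : IsLukPath f) : lambdaMap (partitionOfPath f) = f := by
  funext m
  have := lambdaMap_add_one (partitionOfPath f) m
  simp only [blockMin_partitionOfPath hL] at this
  linarith [card_filter_opener_eq hL m]

lemma isNoncrossing_of_mem_part
    (h : ∀ a b c d : Fin n, a < b → b < c → c < d →
      c ∈ π.part a → d ∈ π.part b → b ∈ π.part a) :
    IsNoncrossing π := by
  intro a b c d hab hbc hcd B₁ hB₁ B₂ hB₂ ha hc hb hd
  obtain rfl := π.part_eq_of_mem hB₁ ha
  obtain rfl := π.part_eq_of_mem hB₂ hb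
  exact (π.part_eq_of_mem (π.part_mem.2 (mem_univ a)) (h a b c d hab hbc hcd hc hd)).symm

lemma isNoncrossing_partitionOfPath (hL : IsLukPath f) : IsNoncrossing (partitionOfPath f) := by
  refine isNoncrossing_of_mem_part fun a b c d hab hbc hcd hac hbd => ?_
  simp only [mem_part_partitionOfPath] at hac hbd ⊢
  have hdown : ∀ {y : Fin n}, opener f y < y → f y = -1 := fun h =>
    not_not.1 fun hy => h.ne (opener_of_ne hy)
  have hoa : opener f a < c := (opener_le a).trans_lt (hab.trans hbc)
  have hob : opener f b < d := (opener_le b).trans_lt (hbc.trans hcd)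
  rcases lt_trichotomy (opener f a) (opener f b) with hlt | heq | hgt
  · have := opener_le_opener hL (hdown (hac ▸ hoa)) (hdown (hbd ▸ hob)) hcd
      (by rw [← hbd]; exact (opener_le b).trans_lt hbc)
    rw [← hac, ← hbd] at this
    exact absurd this hlt.not_ge
  · exact heq
  · have hb : f b = -1 := hdown (hgt.trans_le ((opener_le a).trans hab.le))
    have := opener_le_opener hL hb (hdown (hac ▸ hoa)) hbc
      (by rw [← hac]; exact (opener_le a).trans_lt hab)
    rw [← hac] at this
    exact absurd this hgt.not_ge

lemma IsNoncrossing.opener_lambdaMap (hnc : IsNoncrossing π) :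
    opener (lambdaMap π) = π.blockMin := by
  funext j
  by_cases hj : IsBlockMin π j
  · have hpos := card_pos.2 ⟨j, π.mem_part (mem_univ j)⟩
    have hup : lambdaMap π j ≠ -1 := by
      rw [lambdaMap_of_isBlockMin hj]
      omega
    rw [opener_of_ne hup, isBlockMin_iff.1 hj]
  · have hlt : π.blockMin j < j := (blockMin_le j).lt_of_ne (mt isBlockMin_iff.2 hj)
    refine opener_eq (isLukPath_lambdaMap π) (lambdaMap_of_not_isBlockMin hj) hlt ?_ ?_
    · rw [pathHeight_lambdaMap (π.blockMin j).isLt.le, pathHeight_lambdaMap j.isLt.le]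
      exact_mod_cast card_lt_card (hnc.pending_blockMin_ssubset hj)
    · intro t hjt htj
      rw [pathHeight_lambdaMap j.isLt.le, pathHeight_lambdaMap (htj.trans j.isLt.le)]
      exact_mod_cast card_le_card (hnc.pending_subset hjt htj)

lemma IsNoncrossing.partitionOfPath_lambdaMap (hnc : IsNoncrossing π) :
    partitionOfPath (lambdaMap π) = π :=
  Finpartition.ext_part fun x _ => by
    ext y
    rw [mem_part_partitionOfPath, hnc.opener_lambdaMap, mem_part_iff_blockMin_eq]

theorem bijOn_lambdaMap :
    Set.BijOn lambdaMap {π : Finpartition (univ : Finset (Fin n)) | IsNoncrossing π}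
      {f | IsLukPath f} :=
  ⟨fun π _ => isLukPath_lambdaMap π,
    fun π₁ hnc₁ π₂ hnc₂ h => by
      rw [← hnc₁.partitionOfPath_lambdaMap, ← hnc₂.partitionOfPath_lambdaMap, h],
    fun _ hL => ⟨_, isNoncrossing_partitionOfPath hL, lambdaMap_partitionOfPath hL⟩⟩

end Bijection

/-- The step of index `m : Fin (2n')` is the `(m+1)`-st step and corresponds to the element
`m+1` of `[2n']`. -/
theorem lambdaMap_bijection_general (n' : ℕ) :
    (∀ π : Finpartition (Finset.univ : Finset (Fin (2 * n'))),
        IsNoncrossing π → IsLukPath (lambdaMap π)) ∧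
    Set.BijOn lambdaMap
      {π : Finpartition (Finset.univ : Finset (Fin (2 * n'))) |
        IsNoncrossing π ∧ IsEvenPartition π}
      {f : Fin (2 * n') → ℤ | IsOddLukPath f} ∧
    (∀ π : Finpartition (Finset.univ : Finset (Fin (2 * n'))),
        IsNoncrossing π → IsEvenPartition π →
          ∀ m : Fin (2 * n'),
            ((1 ≤ lambdaMap π m ↔ IsBlockMin π m) ∧
             (lambdaMap π m = -1 → Odd (pathHeight (lambdaMap π) (m : ℕ)) →
                Even ((m : ℕ) + 1) ∧ ¬ IsBlockMin π m) ∧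
             (lambdaMap π m = -1 → Even (pathHeight (lambdaMap π) (m : ℕ)) →
                Odd ((m : ℕ) + 1) ∧ ¬ IsBlockMin π m))) := by
  refine ⟨fun π _ => isLukPath_lambdaMap π, ⟨?_, ?_, ?_⟩, ?_⟩
  · rintro π ⟨-, hev⟩
    exact ⟨isLukPath_lambdaMap π, (isEvenPartition_iff_odd_lambdaMap π).1 hev⟩
  · exact bijOn_lambdaMap.injOn.mono fun π hπ => hπ.1
  · rintro f ⟨hL, hodd⟩
    obtain ⟨π, hnc, rfl⟩ := bijOn_lambdaMap.surjOn hL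
    exact ⟨π, ⟨hnc, (isEvenPartition_iff_odd_lambdaMap π).2 hodd⟩, rfl⟩
  · intro π _ hev m
    have hmin : 1 ≤ lambdaMap π m ↔ IsBlockMin π m := one_le_lambdaMap_iff hev
    have hpar := even_pathHeight_add ((isEvenPartition_iff_odd_lambdaMap π).1 hev) m.isLt.le
    rw [Int.even_iff] at hpar
    have hnot (hdown : lambdaMap π m = -1) : ¬ IsBlockMin π m := fun h => by
      have := hmin.2 h
      omega
    refine ⟨hmin, fun hdown hodd => ⟨?_, hnot hdown⟩,
      fun hdown heven => ⟨?_, hnot hdown⟩⟩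
    · rw [Int.odd_iff] at hodd
      rw [Nat.even_iff]
      omega
    · rw [Int.even_iff] at heven
      rw [Nat.odd_iff]
      omega

/-- Proposition 2.2 / Corollary 2.3: `Λ(π)` is a Łukasiewicz path for any noncrossing `π`,
`Λ` restricts to a bijection `NC^even(2n') → L^odd(2n')`, and the correspondences between
steps of `Λ(π)` and elements of `[2n']` (1-based: the step of index `m : Fin (2n')`
is the `(m+1)`-st step, corresponding to the element `m+1` of `[2n']`). -/
theorem lambdaMap_bijection (n' : ℕ) (hn' : 1 ≤ n') :
    (∀ π : Finpartition (Finset.univ : Finset (Fin (2 * n'))),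
        IsNoncrossing π → IsLukPath (lambdaMap π)) ∧
    Set.BijOn lambdaMap
      {π : Finpartition (Finset.univ : Finset (Fin (2 * n'))) |
        IsNoncrossing π ∧ IsEvenPartition π}
      {f : Fin (2 * n') → ℤ | IsOddLukPath f} ∧
    (∀ π : Finpartition (Finset.univ : Finset (Fin (2 * n'))),
        IsNoncrossing π → IsEvenPartition π →
          ∀ m : Fin (2 * n'),
            ((1 ≤ lambdaMap π m ↔ IsBlockMin π m) ∧
             (lambdaMap π m = -1 → Odd (pathHeight (lambdaMap π) (m : ℕ)) →
                Even ((m : ℕ) + 1) ∧ ¬ IsBlockMin π m) ∧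
             (lambdaMap π m = -1 → Even (pathHeight (lambdaMap π) (m : ℕ)) →
                Odd ((m : ℕ) + 1) ∧ ¬ IsBlockMin π m))) :=
  lambdaMap_bijection_general n'
end

section
/- Let t, u be real numbers with t + i ≠ 0 and u + i ≠ 0 for every integer i ≥ 0, and let (κ_{2ℓ})_{ℓ≥1} and (a_{2n})_{n≥1} be real sequences satisfying the formal power series identity exp(Σ_{ℓ≥1} (κ_{2ℓ}/ℓ) z^{2ℓ}) = 1 + Σ_{n≥1} (a_{2n}/((t)_n (u)_n)) z^{2n} in ℝ[[z]]. Then for every n ≥ 1: a_{2n} = ((t)_n (u)_n / (2n)!) · Σ_{π ∈ P^even(2n)} (2^{#(π)} Π_{B∈π} (|B|−1)!) · κ_π, and κ_{2n} = (1/(2(2n−1)!)) · Σ_{π ∈ P^even(2n)} ((−1)^{#(π)−1} (#(π)−1)! Π_{B∈π} |B|!/((t)_{|B|/2} (u)_{|B|/2})) · a_π. -/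
/-!
The first formula is the exponential formula: `N! [z^N] exp F` is the sum, over set partitions
of an `N`-set, of `∏_B |B|! [z^|B|] F`. For partitions with `k` blocks this is
`k! Σ_π ∏_B |B|! [z^|B|] F = N! [z^N] F^k`, proved by induction on `k` by removing one marked
block. As `F = Σ (κ_ℓ/ℓ) z^{2ℓ}` has only even coefficients, only even partitions contribute,
each block with weight `|B|! κ_{|B|/2} / (|B|/2) = 2 (|B|-1)! κ_{|B|/2}`.

For the second formula, `log (exp F) = F`: both sides vanish at `0`, and multiplying their
derivatives by `exp F` gives `(exp F)'` on both sides, which is checked on truncations of the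
exponential and logarithmic series. Expanding `log G = Σ_k (-1)^(k-1) (G - 1)^k / k` with the same
`k`-block formula yields the weights `(-1)^(k-1) (k-1)!`.
-/

open Finset

open Classical in
/-- The finite set of even set partitions of `[n]`. -/
noncomputable def evenPartitions (n : ℕ) :
    Finset (Finpartition (Finset.univ : Finset (Fin n))) :=
  Finset.univ.filter IsEvenPartition

/-- Pochhammer symbol `(v)_n = v (v+1) ⋯ (v+n-1)`. -/
noncomputable def pochEval (v : ℝ) (n : ℕ) : ℝ := (ascPochhammer ℝ n).eval v

/-- Formal exponential of a power series with zero constant term. -/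
noncomputable def fexp (F : PowerSeries ℝ) : PowerSeries ℝ :=
  PowerSeries.mk fun n =>
    ∑ k ∈ Finset.range (n + 1), (PowerSeries.coeff n (F ^ k)) / (k.factorial : ℝ)

/-- The series `Σ_{ℓ≥1} (x_ℓ/ℓ) z^{2ℓ}` associated to a sequence `(x_{2ℓ})_{ℓ≥1}`
(where `x ℓ` stands for `x_{2ℓ}`). -/
noncomputable def evenSeries (x : ℕ → ℝ) : PowerSeries ℝ :=
  PowerSeries.mk fun j => if j ≠ 0 ∧ j % 2 = 0 then x (j / 2) / ((j / 2 : ℕ) : ℝ) else 0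

/-- The series `1 + Σ_{n≥1} (a_{2n}/((t)_n (u)_n)) z^{2n}` (where `a n` stands for `a_{2n}`). -/
noncomputable def coeffSeriesTU (t u : ℝ) (a : ℕ → ℝ) : PowerSeries ℝ :=
  PowerSeries.mk fun j =>
    if j = 0 then 1
    else if j % 2 = 0 then a (j / 2) / (pochEval t (j / 2) * pochEval u (j / 2)) else 0

namespace PowerSeries

section CommSemiring

variable {R : Type*} [CommSemiring R]

theorem coeff_pow_mul_eq_zero_of_lt {F : R⟦X⟧} (hF : constantCoeff F = 0) (G : R⟦X⟧)
    {n k : ℕ} (h : n < k) : coeff n (F ^ k * G) = 0 := by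
  have hX : X ^ k ∣ F ^ k * G := (pow_dvd_pow_of_dvd (X_dvd_iff.2 hF) k).mul_right G
  exact X_pow_dvd_iff.1 hX n h

theorem coeff_mul_eq_of_coeff_eq {f g : R⟦X⟧} (h : R⟦X⟧) {n : ℕ}
    (hfg : ∀ i ≤ n, coeff i f = coeff i g) : coeff n (f * h) = coeff n (g * h) := by
  rw [coeff_mul, coeff_mul]
  refine Finset.sum_congr rfl fun p hp => ?_
  rw [hfg p.1 (HasAntidiagonal.antidiagonal.fst_le hp)]

end CommSemiring

end PowerSeries

open PowerSeries

noncomputable def expPartial (F : ℝ⟦X⟧) (N : ℕ) : ℝ⟦X⟧ :=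
  ∑ k ∈ range N, C (1 / (k.factorial : ℝ)) * F ^ k

theorem coeff_expPartial (F : ℝ⟦X⟧) (N n : ℕ) :
    coeff n (expPartial F N) = ∑ k ∈ range N, coeff n (F ^ k) / (k.factorial : ℝ) := by
  simp only [expPartial, map_sum, coeff_C_mul]
  exact sum_congr rfl fun k _ => by ring

theorem coeff_fexp_eq_coeff_expPartial {F : ℝ⟦X⟧} (hF : constantCoeff F = 0) {n N : ℕ}
    (h : n < N) : coeff n (fexp F) = coeff n (expPartial F N) := by
  rw [coeff_expPartial, fexp, coeff_mk]
  refine sum_subset (range_subset_range.2 h) fun k _ hk => ?_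
  rw [← mul_one (F ^ k), coeff_pow_mul_eq_zero_of_lt hF 1 (not_lt.1 (mt mem_range.2 hk)), zero_div]

theorem derivative_expPartial_succ (F : ℝ⟦X⟧) (N : ℕ) :
    d⁄dX ℝ (expPartial F (N + 1)) = expPartial F N * d⁄dX ℝ F := by
  simp only [expPartial, map_sum, sum_mul, Derivation.leibniz, derivative_C,
    smul_eq_mul, derivative_pow]
  rw [sum_range_succ']
  simp only [Nat.cast_zero, zero_mul, mul_zero, add_zero]
  refine sum_congr rfl fun k _ => ?_
  have hk : ((k + 1 : ℕ) : ℝ⟦X⟧) = C ((k + 1 : ℕ) : ℝ) := by simp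
  rw [hk, Nat.add_sub_cancel, Nat.factorial_succ, Nat.cast_mul, ← mul_assoc, ← mul_assoc,
    ← map_mul]
  congr 2
  field_simp

theorem derivative_fexp {F : ℝ⟦X⟧} (hF : constantCoeff F = 0) :
    d⁄dX ℝ (fexp F) = fexp F * d⁄dX ℝ F := by
  ext n
  rw [coeff_derivative, coeff_fexp_eq_coeff_expPartial hF (Nat.lt_succ_self (n + 1)),
    ← coeff_derivative, derivative_expPartial_succ]
  exact coeff_mul_eq_of_coeff_eq _ fun i hi =>
    (coeff_fexp_eq_coeff_expPartial hF (Nat.lt_succ_of_le hi)).symm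

noncomputable def logPartial (H : ℝ⟦X⟧) (N : ℕ) : ℝ⟦X⟧ :=
  ∑ k ∈ range N, C ((-1) ^ k / ((k : ℝ) + 1)) * H ^ (k + 1)

/-- The formal logarithm `Σ_{k ≥ 1} (-1)^(k-1) (G - 1)^k / k`; when `constantCoeff G = 1`, only
the terms with `k ≤ n` contribute to the coefficient of `X^n`. -/
noncomputable def flog (G : ℝ⟦X⟧) : ℝ⟦X⟧ :=
  mk fun n => coeff n (logPartial (G - 1) n)

theorem coeff_logPartial (H : ℝ⟦X⟧) (N n : ℕ) :
    coeff n (logPartial H N) = ∑ k ∈ range N, (-1) ^ k / ((k : ℝ) + 1) * coeff n (H ^ (k + 1)) := by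
  simp only [logPartial, map_sum, coeff_C_mul]

theorem coeff_flog_eq_coeff_logPartial {G : ℝ⟦X⟧} (hG : constantCoeff G = 1) {n N : ℕ}
    (h : n ≤ N) : coeff n (flog G) = coeff n (logPartial (G - 1) N) := by
  have hG1 : constantCoeff (G - 1) = 0 := by simp [hG]
  rw [flog, coeff_mk, coeff_logPartial, coeff_logPartial]
  refine sum_subset (range_subset_range.2 h) fun k _ hk => ?_
  have hnk : n < k + 1 := Nat.lt_succ_of_le (not_lt.1 (mt mem_range.2 hk))
  rw [← mul_one ((G - 1) ^ (k + 1)), coeff_pow_mul_eq_zero_of_lt hG1 1 hnk, mul_zero]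

theorem derivative_logPartial (H : ℝ⟦X⟧) (N : ℕ) :
    d⁄dX ℝ (logPartial H N) = (∑ k ∈ range N, (-H) ^ k) * d⁄dX ℝ H := by
  simp only [logPartial, map_sum, sum_mul, Derivation.leibniz, derivative_C,
    mul_zero, add_zero, smul_eq_mul, derivative_pow]
  refine sum_congr rfl fun k _ => ?_
  have hk : ((k + 1 : ℕ) : ℝ⟦X⟧) = C ((k : ℝ) + 1) := by simp
  have hneg : (-H) ^ k = C ((-1) ^ k) * H ^ k := by
    rw [neg_pow, map_pow, map_neg, map_one]
  rw [hk, Nat.add_sub_cancel, hneg, ← mul_assoc, ← mul_assoc, ← map_mul]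
  congr 3
  field_simp

theorem mul_derivative_flog {G : ℝ⟦X⟧} (hG : constantCoeff G = 1) :
    G * d⁄dX ℝ (flog G) = d⁄dX ℝ G := by
  have hG1 : constantCoeff (-(G - 1)) = 0 := by simp [hG]
  ext n
  have htrunc : ∀ i ≤ n,
      coeff i (d⁄dX ℝ (flog G)) = coeff i (d⁄dX ℝ (logPartial (G - 1) (n + 1))) := fun i hi => by
    rw [coeff_derivative, coeff_derivative,
      coeff_flog_eq_coeff_logPartial hG (N := n + 1) (by omega)]
  have hgeom : G * ∑ k ∈ range (n + 1), (-(G - 1)) ^ k = 1 - (-(G - 1)) ^ (n + 1) := by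
    rw [← mul_neg_geom_sum]
    ring
  rw [mul_comm, coeff_mul_eq_of_coeff_eq _ htrunc, mul_comm, derivative_logPartial, ← mul_assoc,
    hgeom, sub_mul, map_sub, one_mul, coeff_pow_mul_eq_zero_of_lt hG1 _ (Nat.lt_succ_self n),
    sub_zero, map_sub, derivative_one, sub_zero]

theorem flog_fexp {F : ℝ⟦X⟧} (hF : constantCoeff F = 0) : flog (fexp F) = F := by
  have h1 : constantCoeff (fexp F) = 1 := by
    rw [← coeff_zero_eq_constantCoeff_apply]
    simp [fexp]
  have hne : fexp F ≠ 0 := fun h0 => by simp [h0] at h1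
  refine derivative.ext (mul_left_cancel₀ hne ?_) ?_
  · rw [mul_derivative_flog h1, derivative_fexp hF]
  · rw [hF, ← coeff_zero_eq_constantCoeff_apply]
    simp [flog, logPartial]

section ExponentialFormula

variable {α : Type*} [DecidableEq α]

theorem Finpartition.parts_avoid_of_mem {s : Finset α} (π : Finpartition s) {B : Finset α}
    (hB : B ∈ π.parts) : (π.avoid B).parts = π.parts.erase B := by
  ext C
  rw [Finpartition.mem_avoid, mem_erase]
  constructor
  · rintro ⟨D, hD, hDB, rfl⟩
    have hne : D ≠ B := by rintro rfl; exact hDB le_rfl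
    have hdisj : Disjoint D B := π.disjoint hD hB hne
    rw [sdiff_eq_self_of_disjoint hdisj]
    exact ⟨hne, hD⟩
  · rintro ⟨hne, hC⟩
    have hdisj : Disjoint C B := π.disjoint hC hB hne
    exact ⟨C, hC, fun hle => π.ne_bot hC (hdisj.eq_bot_of_le hle),
      sdiff_eq_self_of_disjoint hdisj⟩

def partitionsWithCard (s : Finset α) (k : ℕ) : Finset (Finpartition s) :=
  univ.filter fun π => #π.parts = k

theorem partitionsWithCard_zero (s : Finset α) :
    partitionsWithCard s 0 = if s = ∅ then univ else ∅ := by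
  ext π
  simp only [partitionsWithCard, mem_filter, mem_univ, true_and, card_eq_zero,
    Finpartition.parts_eq_empty_iff, bot_eq_empty]
  split_ifs <;> simp_all

/-- Marking a block `B` of a partition of `s` amounts to choosing a nonempty `B ⊆ s` together with
a partition of `s \ B`. -/
theorem sum_partitionsWithCard_succ_sum_parts {M : Type*} [AddCommMonoid M] (s : Finset α)
    (k : ℕ) (g : (B : Finset α) → Finpartition (s \ B) → M) :
    ∑ π ∈ partitionsWithCard s (k + 1), ∑ B ∈ π.parts, g B (π.avoid B) =
      ∑ B ∈ s.powerset.filter Finset.Nonempty, ∑ σ ∈ partitionsWithCard (s \ B) k, g B σ := by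
  have hsub {B : Finset α} (hB : B ∈ s.powerset.filter Finset.Nonempty) :
      B ≠ ⊥ ∧ s \ B ⊔ B = s := by
    rw [mem_filter, mem_powerset] at hB
    exact ⟨hB.2.ne_empty, sdiff_union_of_subset hB.1⟩
  rw [sum_sigma', sum_sigma']
  refine sum_bij' (fun p _ => ⟨p.2, p.1.avoid p.2⟩)
    (fun q hq => ⟨q.2.extend (hsub (mem_sigma.1 hq).1).1 sdiff_disjoint
      (hsub (mem_sigma.1 hq).1).2, q.1⟩) ?_ ?_ ?_ ?_ (fun _ _ => rfl)
  · rintro ⟨π, B⟩ hp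
    simp only [mem_sigma, partitionsWithCard, mem_filter, mem_univ, true_and,
      mem_powerset] at hp ⊢
    rw [π.parts_avoid_of_mem hp.2, card_erase_of_mem hp.2, hp.1]
    exact ⟨⟨π.le hp.2, π.nonempty_of_mem_parts hp.2⟩, rfl⟩
  · rintro ⟨B, σ⟩ hq
    simp only [mem_sigma, partitionsWithCard, mem_filter, mem_univ, true_and] at hq ⊢
    rw [Finpartition.card_extend, hq.2, Finpartition.extend_parts]
    exact ⟨rfl, mem_insert_self _ _⟩
  · rintro ⟨π, B⟩ hp
    refine Sigma.ext (Finpartition.ext ?_) HEq.rfl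
    rw [Finpartition.extend_parts, π.parts_avoid_of_mem (mem_sigma.1 hp).2, insert_erase]
    exact (mem_sigma.1 hp).2
  · rintro ⟨B, σ⟩ hq
    have hBσ : B ∉ σ.parts := fun hB =>
      (σ.nonempty_of_mem_parts hB).ne_empty (subset_empty.1 fun x hx =>
        absurd hx (mem_sdiff.1 (σ.le hB hx)).2)
    refine Sigma.ext rfl (heq_of_eq (Finpartition.ext ?_))
    rw [Finpartition.parts_avoid_of_mem _
        (by rw [Finpartition.extend_parts]; exact mem_insert_self _ _),
      Finpartition.extend_parts, erase_insert hBσ]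

theorem succ_mul_sum_partitionsWithCard_succ {R : Type*} [CommSemiring R] (s : Finset α)
    (k : ℕ) (w : Finset α → R) :
    ((k + 1 : ℕ) : R) * ∑ π ∈ partitionsWithCard s (k + 1), ∏ B ∈ π.parts, w B =
      ∑ B ∈ s.powerset.filter Finset.Nonempty,
        w B * ∑ σ ∈ partitionsWithCard (s \ B) k, ∏ C ∈ σ.parts, w C := by
  have hmarked : ∀ π ∈ partitionsWithCard s (k + 1),
      ((k + 1 : ℕ) : R) * ∏ B ∈ π.parts, w B =
        ∑ B ∈ π.parts, w B * ∏ C ∈ (π.avoid B).parts, w C := by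
    intro π hπ
    rw [partitionsWithCard, mem_filter] at hπ
    rw [sum_congr rfl fun B hB => by rw [π.parts_avoid_of_mem hB, mul_prod_erase _ _ hB],
      sum_const, hπ.2, nsmul_eq_mul]
  simp only [mul_sum]
  rw [sum_congr rfl hmarked, sum_partitionsWithCard_succ_sum_parts s k
    fun B σ => w B * ∏ C ∈ σ.parts, w C]

theorem sum_powerset_factorial_mul_coeff {R : Type*} [CommSemiring R] (F G : R⟦X⟧)
    (s : Finset α) :
    ∑ B ∈ s.powerset, ((#B).factorial * coeff #B F) * ((#(s \ B)).factorial * coeff #(s \ B) G) =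
      ((#s).factorial : R) * coeff #s (F * G) := by
  rw [sum_congr rfl fun B hB => by rw [card_sdiff_of_subset (mem_powerset.1 hB)],
    sum_powerset_apply_card fun m => ((m.factorial * coeff m F) *
      ((#s - m).factorial * coeff (#s - m) G) : R),
    coeff_mul, Nat.sum_antidiagonal_eq_sum_range_succ_mk, mul_sum]
  refine sum_congr rfl fun m hm => ?_
  rw [nsmul_eq_mul, ← Nat.choose_mul_factorial_mul_factorial (Nat.lt_succ_iff.1 (mem_range.1 hm))]
  push_cast
  ring

theorem factorial_mul_sum_partitionsWithCard {R : Type*} [CommRing R] {F : R⟦X⟧}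
    (hF : constantCoeff F = 0) (k : ℕ) (s : Finset α) :
    (k.factorial : R) * ∑ π ∈ partitionsWithCard s k, ∏ B ∈ π.parts, ((#B).factorial * coeff #B F) =
      ((#s).factorial : R) * coeff #s (F ^ k) := by
  induction k generalizing s with
  | zero =>
    rw [partitionsWithCard_zero, pow_zero, coeff_one]
    rcases eq_or_ne s ∅ with rfl | hs
    · have hparts (π : Finpartition (∅ : Finset α)) : π.parts = ∅ :=
        Finpartition.parts_eq_empty_iff.2 rfl
      have hunique : Fintype.card (Finpartition (∅ : Finset α)) = 1 :=
        Fintype.card_eq_one_iff.2 ⟨Finpartition.empty _, fun π => Finpartition.ext (hparts π)⟩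
      simp [hparts, hunique]
    · simp [hs]
  | succ k ih =>
    set w : Finset α → R := fun B => (#B).factorial * coeff #B F
    have hw : ∀ B, w B ≠ 0 → B.Nonempty := fun B hB => by
      rw [nonempty_iff_ne_empty]; rintro rfl; simp [w, hF] at hB
    calc ((k + 1).factorial : R) * ∑ π ∈ partitionsWithCard s (k + 1), ∏ B ∈ π.parts, w B
        = k.factorial * (((k + 1 : ℕ) : R) *
            ∑ π ∈ partitionsWithCard s (k + 1), ∏ B ∈ π.parts, w B) := by
          rw [Nat.factorial_succ, Nat.cast_mul]; ring
      _ = ∑ B ∈ s.powerset, w B * ((#(s \ B)).factorial * coeff #(s \ B) (F ^ k)) := by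
          rw [succ_mul_sum_partitionsWithCard_succ, mul_sum,
            sum_filter_of_ne fun B _ h => hw B (left_ne_zero_of_mul (right_ne_zero_of_mul h))]
          exact sum_congr rfl fun B _ => by rw [← ih]; ring
      _ = ((#s).factorial : R) * coeff #s (F ^ (k + 1)) := by
          rw [sum_powerset_factorial_mul_coeff, pow_succ']

theorem sum_eq_sum_range_sum_partitionsWithCard {M : Type*} [AddCommMonoid M] (s : Finset α)
    (f : Finpartition s → M) :
    ∑ π, f π = ∑ k ∈ range (#s + 1), ∑ π ∈ partitionsWithCard s k, f π :=
  (sum_fiberwise_of_maps_to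
    (fun π _ => mem_range.2 (Nat.lt_succ_of_le π.card_parts_le_card)) f).symm

theorem factorial_mul_coeff_fexp {F : ℝ⟦X⟧} (hF : constantCoeff F = 0) (s : Finset α) :
    ((#s).factorial : ℝ) * coeff #s (fexp F) =
      ∑ π : Finpartition s, ∏ B ∈ π.parts, (((#B).factorial : ℝ) * coeff #B F) := by
  rw [sum_eq_sum_range_sum_partitionsWithCard, fexp, coeff_mk, mul_sum]
  refine sum_congr rfl fun k _ => ?_
  have hk : (k.factorial : ℝ) ≠ 0 := by positivity
  rw [← mul_div_assoc, ← factorial_mul_sum_partitionsWithCard hF, mul_div_cancel_left₀ _ hk]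

theorem factorial_mul_coeff_flog {G : ℝ⟦X⟧} (hG : constantCoeff G = 1) {s : Finset α}
    (hs : s.Nonempty) :
    ((#s).factorial : ℝ) * coeff #s (flog G) =
      ∑ π : Finpartition s, ((-1) ^ (#π.parts - 1) * ((#π.parts - 1).factorial : ℝ)) *
        ∏ B ∈ π.parts, (((#B).factorial : ℝ) * coeff #B (G - 1)) := by
  have hG1 : constantCoeff (G - 1) = 0 := by simp [hG]
  rw [sum_eq_sum_range_sum_partitionsWithCard, sum_range_succ', partitionsWithCard_zero,
    if_neg hs.ne_empty, sum_empty, add_zero, flog, coeff_mk, coeff_logPartial, mul_sum]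
  refine sum_congr rfl fun k _ => ?_
  have key := factorial_mul_sum_partitionsWithCard hG1 (k + 1) s
  rw [Nat.factorial_succ, Nat.cast_mul] at key
  have hsign : ∀ π ∈ partitionsWithCard s (k + 1),
      ((-1) ^ (#π.parts - 1) * ((#π.parts - 1).factorial : ℝ)) *
        ∏ B ∈ π.parts, (((#B).factorial : ℝ) * coeff #B (G - 1)) =
      ((-1) ^ k * (k.factorial : ℝ)) *
        ∏ B ∈ π.parts, (((#B).factorial : ℝ) * coeff #B (G - 1)) := by
    intro π hπ
    rw [partitionsWithCard, mem_filter] at hπ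
    rw [hπ.2, Nat.add_sub_cancel]
  rw [sum_congr rfl hsign, ← mul_sum]
  have hk : ((k + 1 : ℕ) : ℝ) ≠ 0 := by positivity
  push_cast at key hk
  field_simp
  linear_combination key.symm

end ExponentialFormula

theorem pochEval_ne_zero {v : ℝ} (hv : ∀ i : ℕ, v + i ≠ 0) (n : ℕ) : pochEval v n ≠ 0 := by
  induction n with
  | zero => simp [pochEval]
  | succ m ih =>
    rw [pochEval, ascPochhammer_succ_eval]
    exact mul_ne_zero ih (hv m)

theorem constantCoeff_evenSeries (κ : ℕ → ℝ) : constantCoeff (evenSeries κ) = 0 := by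
  simp [← coeff_zero_eq_constantCoeff_apply, evenSeries]

theorem coeff_evenSeries_of_odd (κ : ℕ → ℝ) {m : ℕ} (hm : Odd m) :
    coeff m (evenSeries κ) = 0 := by
  rw [evenSeries, coeff_mk, if_neg]
  rw [Nat.odd_iff] at hm
  omega

theorem coeff_evenSeries_two_mul (κ : ℕ → ℝ) {n : ℕ} (hn : n ≠ 0) :
    coeff (2 * n) (evenSeries κ) = κ n / n := by
  rw [evenSeries, coeff_mk, if_pos (by omega), Nat.mul_div_cancel_left n two_pos]

theorem factorial_mul_coeff_evenSeries_two_mul (κ : ℕ → ℝ) {n : ℕ} (hn : n ≠ 0) :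
    ((2 * n).factorial : ℝ) * coeff (2 * n) (evenSeries κ) =
      2 * ((2 * n - 1).factorial : ℝ) * κ n := by
  rw [coeff_evenSeries_two_mul κ hn, ← Nat.mul_factorial_pred (by omega)]
  push_cast
  field_simp

theorem constantCoeff_coeffSeriesTU (t u : ℝ) (a : ℕ → ℝ) :
    constantCoeff (coeffSeriesTU t u a) = 1 := by
  simp [← coeff_zero_eq_constantCoeff_apply, coeffSeriesTU]

theorem coeff_coeffSeriesTU_of_odd (t u : ℝ) (a : ℕ → ℝ) {m : ℕ} (hm : Odd m) :
    coeff m (coeffSeriesTU t u a) = 0 := by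
  rw [Nat.odd_iff] at hm
  rw [coeffSeriesTU, coeff_mk, if_neg (by omega), if_neg (by omega)]

theorem coeff_coeffSeriesTU_two_mul (t u : ℝ) (a : ℕ → ℝ) {n : ℕ} (hn : n ≠ 0) :
    coeff (2 * n) (coeffSeriesTU t u a) = a n / (pochEval t n * pochEval u n) := by
  rw [coeffSeriesTU, coeff_mk, if_neg (by omega), if_pos (by omega),
    Nat.mul_div_cancel_left n two_pos]

theorem mem_evenPartitions {n : ℕ} {π : Finpartition (univ : Finset (Fin n))} :
    π ∈ evenPartitions n ↔ IsEvenPartition π := by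
  simp [evenPartitions]

theorem sum_evenPartitions_eq_sum {R : Type*} [CommSemiring R] {n : ℕ}
    (f : Finpartition (univ : Finset (Fin n)) → R)
    (w : ℕ → R) (hw : ∀ m, Odd m → w m = 0) :
    ∑ π ∈ evenPartitions n, f π * ∏ B ∈ π.parts, w #B = ∑ π, f π * ∏ B ∈ π.parts, w #B := by
  refine sum_subset (subset_univ _) fun π _ hπ => ?_
  obtain ⟨B, hB, hodd⟩ : ∃ B ∈ π.parts, ¬Even #B := by
    simpa [mem_evenPartitions, IsEvenPartition] using hπ
  rw [prod_eq_zero hB (hw _ (Nat.not_even_iff_odd.1 hodd)), mul_zero]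

theorem prod_factorial_mul_coeff_evenSeries (κ : ℕ → ℝ) {n : ℕ}
    {π : Finpartition (univ : Finset (Fin n))} (hπ : π ∈ evenPartitions n) :
    ∏ B ∈ π.parts, (((#B).factorial : ℝ) * coeff #B (evenSeries κ)) =
      (2 ^ #π.parts * ∏ B ∈ π.parts, ((#B - 1).factorial : ℝ)) * ∏ B ∈ π.parts, κ (#B / 2) := by
  rw [← prod_const, ← prod_mul_distrib, ← prod_mul_distrib]
  refine prod_congr rfl fun B hB => ?_
  obtain ⟨j, hj⟩ := mem_evenPartitions.1 hπ B hB
  have hj0 : j ≠ 0 := by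
    rintro rfl
    exact (π.nonempty_of_mem_parts hB).ne_empty (card_eq_zero.1 hj)
  rw [hj, ← two_mul, factorial_mul_coeff_evenSeries_two_mul κ hj0,
    Nat.mul_div_cancel_left j two_pos]

theorem prod_factorial_mul_coeff_coeffSeriesTU_sub_one (t u : ℝ) (a : ℕ → ℝ) {n : ℕ}
    {π : Finpartition (univ : Finset (Fin n))} (hπ : π ∈ evenPartitions n) :
    ∏ B ∈ π.parts, (((#B).factorial : ℝ) * coeff #B (coeffSeriesTU t u a - 1)) =
      (∏ B ∈ π.parts, ((#B).factorial : ℝ) / (pochEval t (#B / 2) * pochEval u (#B / 2))) *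
        ∏ B ∈ π.parts, a (#B / 2) := by
  rw [← prod_mul_distrib]
  refine prod_congr rfl fun B hB => ?_
  obtain ⟨j, hj⟩ := mem_evenPartitions.1 hπ B hB
  have hj0 : j ≠ 0 := by
    rintro rfl
    exact (π.nonempty_of_mem_parts hB).ne_empty (card_eq_zero.1 hj)
  rw [hj, ← two_mul, map_sub, coeff_one, if_neg (by omega), sub_zero,
    coeff_coeffSeriesTU_two_mul t u a hj0, Nat.mul_div_cancel_left j two_pos]
  ring

theorem coefficient_eq_sum_evenPartitions {t u : ℝ} (ht : ∀ i : ℕ, t + i ≠ 0)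
    (hu : ∀ i : ℕ, u + i ≠ 0) {κ a : ℕ → ℝ} (h : fexp (evenSeries κ) = coeffSeriesTU t u a)
    {n : ℕ} (hn : n ≠ 0) :
    a n = pochEval t n * pochEval u n / ((2 * n).factorial : ℝ) *
      ∑ π ∈ evenPartitions (2 * n),
        ((2 : ℝ) ^ #π.parts * ∏ B ∈ π.parts, ((#B - 1).factorial : ℝ)) *
          ∏ B ∈ π.parts, κ (#B / 2) := by
  have hodd (m : ℕ) (hm : Odd m) : (m.factorial : ℝ) * coeff m (evenSeries κ) = 0 := by
    rw [coeff_evenSeries_of_odd κ hm, mul_zero]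
  have heven := sum_evenPartitions_eq_sum (n := 2 * n) (fun _ => 1) _ hodd
  simp only [one_mul] at heven
  have hexp := factorial_mul_coeff_fexp (constantCoeff_evenSeries κ) (univ : Finset (Fin (2 * n)))
  rw [card_univ, Fintype.card_fin, h, coeff_coeffSeriesTU_two_mul t u a hn, ← heven,
    sum_congr rfl fun π hπ => prod_factorial_mul_coeff_evenSeries κ hπ] at hexp
  rw [← hexp]
  field_simp [pochEval_ne_zero ht n, pochEval_ne_zero hu n]

theorem cumulant_eq_sum_evenPartitions {t u : ℝ} {κ a : ℕ → ℝ}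
    (h : fexp (evenSeries κ) = coeffSeriesTU t u a) {n : ℕ} (hn : n ≠ 0) :
    κ n = 1 / (2 * ((2 * n - 1).factorial : ℝ)) *
      ∑ π ∈ evenPartitions (2 * n),
        ((-1 : ℝ) ^ (#π.parts - 1) * ((#π.parts - 1).factorial : ℝ) *
          ∏ B ∈ π.parts, ((#B).factorial : ℝ) / (pochEval t (#B / 2) * pochEval u (#B / 2))) *
          ∏ B ∈ π.parts, a (#B / 2) := by
  have hodd (m : ℕ) (hm : Odd m) :
      (m.factorial : ℝ) * coeff m (coeffSeriesTU t u a - 1) = 0 := by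
    rw [map_sub, coeff_coeffSeriesTU_of_odd t u a hm, coeff_one,
      if_neg (by rintro rfl; exact Nat.not_odd_zero hm), sub_zero, mul_zero]
  have hflog : flog (coeffSeriesTU t u a) = evenSeries κ :=
    h ▸ flog_fexp (constantCoeff_evenSeries κ)
  have hfac : ((2 * n).factorial : ℝ) = 2 * n * (2 * n - 1).factorial := by
    rw [← Nat.mul_factorial_pred (by omega)]
    push_cast
    ring
  have hlog := factorial_mul_coeff_flog (constantCoeff_coeffSeriesTU t u a)
    (univ_nonempty_iff.2 ⟨(⟨0, by omega⟩ : Fin (2 * n))⟩)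
  rw [card_univ, Fintype.card_fin, hflog, coeff_evenSeries_two_mul κ hn,
    ← sum_evenPartitions_eq_sum _ _ hodd, hfac,
    sum_congr rfl fun π hπ => by
      rw [prod_factorial_mul_coeff_coeffSeriesTU_sub_one t u a hπ, ← mul_assoc]] at hlog
  rw [← hlog]
  field_simp

/-- Lemma 3.2: coefficients in terms of cumulants and vice versa, via even set partitions. -/
theorem cumulant_coefficient_formulas (t u : ℝ)
    (ht : ∀ i : ℕ, t + i ≠ 0) (hu : ∀ i : ℕ, u + i ≠ 0)
    (κ a : ℕ → ℝ)
    (h : fexp (evenSeries κ) = coeffSeriesTU t u a) :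
    ∀ n : ℕ, 1 ≤ n →
      (a n = pochEval t n * pochEval u n / ((2 * n).factorial : ℝ) *
        ∑ π ∈ evenPartitions (2 * n),
          ((2 : ℝ) ^ π.parts.card * ∏ B ∈ π.parts, ((B.card - 1).factorial : ℝ)) *
            ∏ B ∈ π.parts, κ (B.card / 2)) ∧
      (κ n = 1 / (2 * ((2 * n - 1).factorial : ℝ)) *
        ∑ π ∈ evenPartitions (2 * n),
          ((-1 : ℝ) ^ (π.parts.card - 1) * ((π.parts.card - 1).factorial : ℝ) *
            ∏ B ∈ π.parts,
              (B.card.factorial : ℝ) / (pochEval t (B.card / 2) * pochEval u (B.card / 2))) *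
            ∏ B ∈ π.parts, a (B.card / 2)) :=
  fun _ hn => ⟨coefficient_eq_sum_evenPartitions ht hu h (by omega),
    cumulant_eq_sum_evenPartitions h (by omega)⟩
end

section
/- Let t, u be real numbers with t + i ≠ 0 and u + i ≠ 0 for every integer i ≥ 0, and let (a_{2n})_{n≥1}, (κ_{2ℓ})_{ℓ≥1}, (m_{2k})_{k≥1} be real sequences satisfying the formal power series identities exp(Σ_{ℓ≥1} (κ_{2ℓ}/ℓ) z^{2ℓ}) = 1 + Σ_{n≥1} (a_{2n}/((t)_n (u)_n)) z^{2n} and exp(t Σ_{k≥1} (m_{2k}/k) z^{2k}) = 1 + Σ_{n≥1} a_{2n} z^{2n} in ℝ[[z]]. Then for every k ≥ 1: m_{2k} = Σ_{P ∈ L^odd(2k)} w_{t,u}(P), where the weight w_{t,u}(P) of an odd Łukasiewicz path P of length 2k is the product over all its steps of the following factors: each up step (1, 2s−1) contributes the factor κ_{2s}; each down step from an odd height 2s+1 (ending at even height 2s) contributes the factor (u+s); and each down step from an even height 2s (ending at odd height 2s−1) contributes the factor (t+s). -/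
open Finset

/-- The series `1 + Σ_{n≥1} a_{2n} z^{2n}`. -/
noncomputable def coeffSeries (a : ℕ → ℝ) : PowerSeries ℝ :=
  PowerSeries.mk fun j =>
    if j = 0 then 1 else if j % 2 = 0 then a (j / 2) else 0

/-!  A Łukasiewicz path of length `n` is encoded by the function `f : Fin n → Fin (n+1)`,
where the `i`-th step of the path is `(1, (f i) - 1)`.  (In any Łukasiewicz path of length `n`
every step `(1,j)` has `-1 ≤ j ≤ n-1`, so this encoding captures all of them.) -/

/-- Height of the vertex just before the (0-based) `m`-th step, for the encoded path `f`. -/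
noncomputable def pathHeightE {n : ℕ} (f : Fin n → Fin (n + 1)) (m : ℕ) : ℤ :=
  ∑ i ∈ Finset.univ.filter (fun j : Fin n => (j : ℕ) < m), (((f i : ℕ) : ℤ) - 1)

/-- The encoded `f` is an odd Łukasiewicz path of length `n`: all steps are of the form
`(1, 2k-1)`, `k ≥ 0`, the path stays (weakly) above the x-axis and ends at `(n,0)`. -/
def IsOddLukPathE {n : ℕ} (f : Fin n → Fin (n + 1)) : Prop :=
  (∀ i, Odd (((f i : ℕ) : ℤ) - 1)) ∧
  (∀ m : ℕ, m ≤ n → 0 ≤ pathHeightE f m) ∧ pathHeightE f n = 0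

open Classical in
/-- The (finite) set `L^odd(n)` of odd Łukasiewicz paths of length `n`, in the above encoding. -/
noncomputable def oddLukPaths (n : ℕ) : Finset (Fin n → Fin (n + 1)) :=
  Finset.univ.filter IsOddLukPathE

/-!
Write `Σ_n b_n z^{2n} = exp (Σ_ℓ (κ_{2ℓ}/ℓ) z^{2ℓ})` and, for every height `h`, let
`G_h = Σ_n (t + ⌈h/2⌉)_n (u + ⌊h/2⌋)_n b_n z^{2n}` (`levelSeries`); the first hypothesis says that
`G_0 = 1 + Σ_n a_{2n} z^{2n}`. Pochhammer arithmetic gives the three-term relation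
`G_{h+1} = G_h + Σ_s κ_{2s+2} D_h(2s+1) z^{2s+2} G_{h+2s+2}`, where `D_h(k)` is the weight of a
straight descent from `h + k` to `h`. Splitting off the first step of a path then shows that the
generating function `P_j` of the odd Łukasiewicz paths from height `j` to `0` satisfies
`P_j G_0 = D_0(j) z^j G_{j+1}`, so `P_0 = G_1 / G_0`. On the other hand `z G_0' = 2t (G_1 - G_0)`,
while the logarithmic derivative of the second hypothesis reads
`z G_0' / G_0 = 2t Σ_k m_{2k} z^{2k}`. Hence `Σ_{k≥1} m_{2k} z^{2k} = P_0 - 1`.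
-/

namespace Finset

lemma sum_filter_even_range {M : Type*} [AddCommMonoid M] (f : ℕ → M) (m : ℕ) :
    ∑ c ∈ (range (2 * m)).filter Even, f c = ∑ i ∈ range m, f (2 * i) := by
  rw [sum_filter]
  induction m with
  | zero => simp
  | succ m ih =>
    rw [show 2 * (m + 1) = 2 * m + 1 + 1 by ring, sum_range_succ, sum_range_succ, ih,
      sum_range_succ]
    simp

lemma sum_antidiagonal_two_mul_add_one {M : Type*} [AddCommMonoid M] (n : ℕ)
    (g : ℕ → ℕ → M) (hg : ∀ p q, p + (2 * q + 1) = 2 * n + 1 → g p (2 * q + 1) = 0) :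
    ∑ x ∈ antidiagonal (2 * n + 1), g x.1 x.2 =
      ∑ i ∈ range (n + 1), g (2 * i + 1) (2 * (n - i)) := by
  symm
  refine sum_of_injOn (fun i => (2 * i + 1, 2 * (n - i))) ?_ ?_ ?_ fun _ _ => rfl
  · intro i hi i' hi' h
    simp only [Prod.mk.injEq] at h
    omega
  · intro i hi
    rw [mem_coe, mem_range] at hi
    rw [mem_coe, HasAntidiagonal.mem_antidiagonal]
    show 2 * i + 1 + 2 * (n - i) = 2 * n + 1
    omega
  · rintro ⟨p, q⟩ hpq hnot
    rw [HasAntidiagonal.mem_antidiagonal] at hpq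
    obtain ⟨q, rfl | rfl⟩ := Nat.even_or_odd' q
    · refine absurd ⟨n - q, ?_, ?_⟩ hnot
      · rw [mem_coe, mem_range]; omega
      · simp only [Prod.mk.injEq]; omega
    · exact hg p q hpq

end Finset

namespace PowerSeries

lemma coeff_succ_X_pow_succ_mul {R : Type*} [Semiring R] (F : R⟦X⟧) (k N : ℕ) :
    coeff (N + 1) (X ^ (k + 1) * F) = coeff N (X ^ k * F) := by
  rw [pow_succ', mul_assoc, coeff_succ_X_mul]

end PowerSeries

namespace Lukasiewicz

open PowerSeries

section Pochhammer

@[simp] lemma pochEval_zero (v : ℝ) : pochEval v 0 = 1 := by simp [pochEval]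

lemma pochEval_succ (v : ℝ) (n : ℕ) : pochEval v (n + 1) = pochEval v n * (v + n) :=
  ascPochhammer_succ_eval n v

lemma pochEval_succ_left (v : ℝ) (n : ℕ) : pochEval v (n + 1) = v * pochEval (v + 1) n := by
  simp [pochEval, ascPochhammer_succ_left, Polynomial.eval_comp]

lemma pochEval_add (v : ℝ) (s m : ℕ) : pochEval v (s + m) = pochEval v s * pochEval (v + s) m := by
  simp [pochEval, ← ascPochhammer_mul, Polynomial.eval_comp]

lemma pochEval_add_one_sub (v : ℝ) (n : ℕ) :
    pochEval (v + 1) (n + 1) - pochEval v (n + 1) = (n + 1) * pochEval (v + 1) n := by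
  rw [pochEval_succ, pochEval_succ_left]
  ring

lemma pochEval_ne_zero {v : ℝ} (hv : ∀ i : ℕ, v + i ≠ 0) (n : ℕ) : pochEval v n ≠ 0 := by
  induction n with
  | zero => simp
  | succ n ih => rw [pochEval_succ]; exact mul_ne_zero ih (hv n)

lemma natCast_mul_pochEval (t : ℝ) (n : ℕ) :
    n * pochEval t n = t * (pochEval (t + 1) n - pochEval t n) := by
  cases n with
  | zero => simp
  | succ n =>
    rw [pochEval_add_one_sub, pochEval_succ_left]
    push_cast
    ring

end Pochhammer

section FormalExp

variable {F : ℝ⟦X⟧}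

noncomputable def expPartial (F : ℝ⟦X⟧) (L : ℕ) : ℝ⟦X⟧ :=
  ∑ k ∈ range L, ((k.factorial : ℝ)⁻¹) • F ^ k

lemma coeff_fexp_eq_coeff_expPartial (hF : constantCoeff F = 0) {M L : ℕ} (hL : M < L) :
    coeff M (fexp F) = coeff M (expPartial F L) := by
  simp only [fexp, expPartial, coeff_mk, map_sum, map_smul, smul_eq_mul, div_eq_inv_mul]
  refine sum_subset (range_subset_range.2 hL) fun k _ hk => ?_
  have hMk : M < k := by simpa using hk
  rw [X_pow_dvd_iff.1 (pow_dvd_pow_of_dvd (X_dvd_iff.2 hF) k) M hMk, mul_zero]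

lemma derivative_expPartial_succ (F : ℝ⟦X⟧) (L : ℕ) :
    d⁄dX ℝ (expPartial F (L + 1)) = d⁄dX ℝ F * expPartial F L := by
  have hsplit : ∀ L, expPartial F (L + 1) = expPartial F L + ((L.factorial : ℝ)⁻¹) • F ^ L :=
    fun L => sum_range_succ _ _
  induction L with
  | zero => simp [expPartial]
  | succ L ih =>
    rw [hsplit (L + 1), map_add, ih, Derivation.map_smul, derivative_pow, hsplit L, mul_add,
      Nat.add_sub_cancel, mul_assoc, ← nsmul_eq_mul, ← Nat.cast_smul_eq_nsmul ℝ, smul_smul,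
      mul_comm (F ^ L), mul_smul_comm, Nat.factorial_succ]
    congr 2
    push_cast
    field_simp

theorem derivative_fexp (hF : constantCoeff F = 0) :
    d⁄dX ℝ (fexp F) = d⁄dX ℝ F * fexp F := by
  ext n
  rw [coeff_derivative, coeff_fexp_eq_coeff_expPartial hF (L := n + 2) (by omega),
    ← coeff_derivative, derivative_expPartial_succ, coeff_mul, coeff_mul]
  refine sum_congr rfl fun x hx => ?_
  rw [coeff_fexp_eq_coeff_expPartial hF (L := n + 1) (by have := mem_antidiagonal.1 hx; omega)]

end FormalExp

lemma coeff_evenSeries (x : ℕ → ℝ) (N : ℕ) : coeff N (evenSeries x) =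
    if N ≠ 0 ∧ N % 2 = 0 then x (N / 2) / ((N / 2 : ℕ) : ℝ) else 0 :=
  coeff_mk _ _

@[simp] lemma constantCoeff_evenSeries (x : ℕ → ℝ) : constantCoeff (evenSeries x) = 0 := by
  simp [← coeff_zero_eq_constantCoeff_apply, coeff_evenSeries]

lemma coeff_derivative_evenSeries (x : ℕ → ℝ) (p : ℕ) :
    coeff p (d⁄dX ℝ (evenSeries x)) = if p % 2 = 1 then 2 * x ((p + 1) / 2) else 0 := by
  rw [coeff_derivative, coeff_evenSeries]
  split_ifs with h1 h2 h2
  · have : (((p + 1) / 2 : ℕ) : ℝ) ≠ 0 := by norm_cast; omega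
    rw [show ((p : ℝ) + 1) = 2 * (((p + 1) / 2 : ℕ) : ℝ) by norm_cast; omega]
    field_simp
  · omega
  · omega
  · rw [zero_mul]

/-- `Σ_n b_n w^n = b_0 exp (Σ_ℓ κ_ℓ w^ℓ / ℓ)`, in the coefficient form given by the logarithmic
derivative. -/
def IsExpSeq (κ b : ℕ → ℝ) : Prop :=
  ∀ n : ℕ, ((n : ℝ) + 1) * b (n + 1) = ∑ s ∈ range (n + 1), κ (s + 1) * b (n - s)

lemma isExpSeq_coeff_fexp_evenSeries (x : ℕ → ℝ) :
    IsExpSeq x fun n => coeff (2 * n) (fexp (evenSeries x)) := by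
  intro n
  beta_reduce
  have hD := congrArg (coeff (2 * n + 1)) (derivative_fexp (constantCoeff_evenSeries x))
  rw [coeff_derivative, coeff_mul, sum_antidiagonal_two_mul_add_one n
    (fun p q => coeff p (d⁄dX ℝ (evenSeries x)) * coeff q (fexp (evenSeries x)))
    (fun p q hpq => by rw [coeff_derivative_evenSeries, if_neg (by omega), zero_mul])] at hD
  simp only [coeff_derivative_evenSeries, Nat.mul_add_mod_self_left, Nat.one_mod, if_true] at hD
  simp only [show ∀ i, (2 * i + 1 + 1) / 2 = i + 1 by omega, mul_assoc, ← mul_sum,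
    show 2 * n + 1 + 1 = 2 * (n + 1) by ring] at hD
  push_cast at hD
  linear_combination hD / 2

section Weights

variable (t u : ℝ)

noncomputable def downWeight (x : ℤ) : ℝ :=
  if x % 2 = 1 then u + (((x - 1) / 2 : ℤ) : ℝ) else t + ((x / 2 : ℤ) : ℝ)

lemma downWeight_two_mul (k : ℕ) : downWeight t u (2 * k) = t + k := by
  simp [downWeight]

lemma downWeight_two_mul_add_one (k : ℕ) : downWeight t u (2 * k + 1) = u + k := by
  simp [downWeight, show (2 * (k : ℤ) + 1) % 2 = 1 by omega]

lemma downWeight_add_one (x : ℤ) : downWeight t u (x + 1) = downWeight u (t + 1) x := by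
  obtain ⟨k, rfl | rfl⟩ := Int.even_or_odd' x
  · simp only [downWeight, show (2 * k + 1) % 2 = 1 by omega, show (2 * k) % 2 ≠ 1 by omega,
      if_true, if_false, show (2 * k + 1 - 1) / 2 = k by omega, show 2 * k / 2 = k by omega]
  · simp only [downWeight, show (2 * k + 1 + 1) % 2 ≠ 1 by omega,
      show (2 * k + 1) % 2 = 1 by omega, if_true, if_false,
      show (2 * k + 1 + 1) / 2 = k + 1 by omega, show (2 * k + 1 - 1) / 2 = k by omega]
    push_cast
    ring

/-- The product of the down weights along a straight descent from height `h + k` to `h`. -/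
noncomputable def descentWeight (h k : ℕ) : ℝ :=
  ∏ i ∈ range k, downWeight t u (h + i + 1)

lemma descentWeight_add (h k l : ℕ) :
    descentWeight t u h (k + l) = descentWeight t u h k * descentWeight t u (h + k) l := by
  simp only [descentWeight, prod_range_add]
  congr 1
  refine prod_congr rfl fun i _ => ?_
  push_cast
  ring_nf

lemma descentWeight_add_one_left (h k : ℕ) :
    descentWeight t u (h + 1) k = descentWeight u (t + 1) h k := by
  refine prod_congr rfl fun i _ => ?_
  rw [← downWeight_add_one]
  push_cast
  ring_nf

lemma descentWeight_succ (h k : ℕ) :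
    descentWeight t u h (k + 1) = descentWeight t u h k * downWeight t u (h + k + 1) :=
  prod_range_succ _ _

lemma descentWeight_zero_odd (s : ℕ) :
    descentWeight t u 0 (2 * s + 1) = pochEval u (s + 1) * pochEval (t + 1) s := by
  induction s with
  | zero => simpa [descentWeight, pochEval_succ] using downWeight_two_mul_add_one t u 0
  | succ s ih =>
    have e1 : ((0 : ℕ) : ℤ) + ((2 * s + 1 : ℕ) : ℤ) + 1 = 2 * ((s + 1 : ℕ) : ℤ) := by
      push_cast; ring
    have e2 : ((0 : ℕ) : ℤ) + ((2 * s + 1 + 1 : ℕ) : ℤ) + 1 = 2 * ((s + 1 : ℕ) : ℤ) + 1 := by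
      push_cast; ring
    rw [show 2 * (s + 1) + 1 = 2 * s + 1 + 1 + 1 by ring, descentWeight_succ, descentWeight_succ,
      ih, e1, e2, downWeight_two_mul, downWeight_two_mul_add_one, pochEval_succ u (s + 1),
      pochEval_succ (t + 1) s]
    push_cast
    ring

variable (b : ℕ → ℝ)

noncomputable def levelCoeff (h n : ℕ) : ℝ :=
  pochEval (t + ((h + 1) / 2 : ℕ)) n * pochEval (u + (h / 2 : ℕ)) n * b n

lemma levelCoeff_zero_left (n : ℕ) : levelCoeff t u b 0 n = pochEval t n * pochEval u n * b n := by
  simp [levelCoeff]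

lemma levelCoeff_one_left (n : ℕ) :
    levelCoeff t u b 1 n = pochEval (t + 1) n * pochEval u n * b n := by
  simp [levelCoeff]

lemma levelCoeff_add_one_left (h n : ℕ) :
    levelCoeff t u b (h + 1) n = levelCoeff u (t + 1) b h n := by
  simp only [levelCoeff, show (h + 1 + 1) / 2 = h / 2 + 1 by omega]
  push_cast
  ring_nf

variable {κ : ℕ → ℝ} {b}

lemma levelCoeff_one_zero_sub (hb : IsExpSeq κ b) (n : ℕ) :
    levelCoeff t u b 1 n - levelCoeff t u b 0 n = ∑ s ∈ range n,
      κ (s + 1) * descentWeight t u 0 (2 * s + 1) * levelCoeff t u b (2 * s + 2) (n - s - 1) := by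
  cases n with
  | zero => simp [levelCoeff]
  | succ n =>
    have hterm : ∀ s ∈ range (n + 1),
        κ (s + 1) * descentWeight t u 0 (2 * s + 1) * levelCoeff t u b (2 * s + 2) (n + 1 - s - 1) =
          pochEval u (n + 1) * pochEval (t + 1) n * (κ (s + 1) * b (n - s)) := by
      intro s hs
      have hsn : s ≤ n := Nat.lt_succ_iff.mp (mem_range.mp hs)
      have hu := pochEval_add u (s + 1) (n - s)
      have ht := pochEval_add (t + 1) s (n - s)
      rw [show s + 1 + (n - s) = n + 1 by omega] at hu
      rw [show s + (n - s) = n by omega] at ht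
      rw [descentWeight_zero_odd, levelCoeff, hu, ht, show n + 1 - s - 1 = n - s by omega,
        show (2 * s + 2 + 1) / 2 = s + 1 by omega, show (2 * s + 2) / 2 = s + 1 by omega]
      push_cast
      ring_nf
    rw [sum_congr rfl hterm, ← mul_sum, ← hb, levelCoeff_one_left, levelCoeff_zero_left,
      ← sub_mul, ← sub_mul, pochEval_add_one_sub]
    ring

lemma levelCoeff_succ (hb : IsExpSeq κ b) (h n : ℕ) :
    levelCoeff t u b (h + 1) n = levelCoeff t u b h n + ∑ s ∈ range n, κ (s + 1) *
      descentWeight t u h (2 * s + 1) * levelCoeff t u b (h + 2 * s + 2) (n - s - 1) := by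
  -- shifting all heights by one trades `(t, u)` for `(u, t + 1)`, which reduces `h` to `0`
  induction h generalizing t u with
  | zero => simpa using eq_add_of_sub_eq' (levelCoeff_one_zero_sub t u hb n)
  | succ h ih =>
    rw [levelCoeff_add_one_left t u b (h + 1), levelCoeff_add_one_left t u b h, ih u (t + 1)]
    congr 1
    refine sum_congr rfl fun s _ => ?_
    rw [descentWeight_add_one_left, show h + 1 + 2 * s + 2 = h + 2 * s + 2 + 1 by ring,
      levelCoeff_add_one_left t u b (h + 2 * s + 2)]

end Weights

section Paths

variable {n : ℕ}

/-- Height before the `m`-th step of the path whose `i`-th step is `(1, g i - 1)`. -/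
noncomputable def lukHeight (g : Fin n → ℕ) (m : ℕ) : ℤ :=
  ∑ i ∈ univ.filter (fun i : Fin n => (i : ℕ) < m), ((g i : ℤ) - 1)

/-- `g` encodes an odd Łukasiewicz path from height `j` down to height `0`. -/
def IsOddLukFrom (j : ℤ) (g : Fin n → ℕ) : Prop :=
  (∀ i, Even (g i)) ∧ (∀ m ≤ n, 0 ≤ j + lukHeight g m) ∧ j + lukHeight g n = 0

noncomputable instance (j : ℤ) : DecidablePred (IsOddLukFrom (n := n) j) := fun g => by
  unfold IsOddLukFrom; infer_instance

@[simp] lemma lukHeight_zero (g : Fin n → ℕ) : lukHeight g 0 = 0 := by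
  simp [lukHeight]

lemma lukHeight_cons_succ (c : ℕ) (g : Fin n → ℕ) (m : ℕ) :
    lukHeight (Fin.cons c g : Fin (n + 1) → ℕ) (m + 1) = c - 1 + lukHeight g m := by
  simp only [lukHeight, sum_filter, Fin.sum_univ_succ, Fin.val_zero, Fin.cons_zero,
    Fin.cons_succ, Fin.val_succ]
  simp

lemma isOddLukFrom_cons_iff {j : ℤ} (hj : 0 ≤ j) (c : ℕ) (g : Fin n → ℕ) :
    IsOddLukFrom j (Fin.cons c g : Fin (n + 1) → ℕ) ↔ Even c ∧ IsOddLukFrom (j + c - 1) g := by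
  simp only [IsOddLukFrom, Fin.forall_fin_succ, Fin.cons_zero, Fin.cons_succ, lukHeight_cons_succ]
  constructor
  · rintro ⟨⟨hc, hg⟩, hnonneg, hend⟩
    refine ⟨hc, hg, fun m hm => ?_, by linarith⟩
    linarith [lukHeight_cons_succ c g m ▸ hnonneg (m + 1) (by omega)]
  · rintro ⟨hc, hg, hnonneg, hend⟩
    refine ⟨⟨hc, hg⟩, fun m hm => ?_, by linarith⟩
    cases m with
    | zero => simpa using hj
    | succ m => linarith [lukHeight_cons_succ c g m, hnonneg m (by omega)]

variable {j : ℤ} {g : Fin n → ℕ}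

lemma IsOddLukFrom.nonneg (h : IsOddLukFrom j g) : 0 ≤ j := by
  simpa using h.2.1 0 (Nat.zero_le n)

lemma IsOddLukFrom.le_length (h : IsOddLukFrom j g) : j ≤ n := by
  induction n generalizing j with
  | zero => simpa using h.2.2.le
  | succ n ih =>
    rw [← Fin.cons_self_tail g, isOddLukFrom_cons_iff h.nonneg] at h
    have := ih h.2
    push_cast
    omega

lemma IsOddLukFrom.apply_add_le (h : IsOddLukFrom j g) (i : Fin n) : g i + i ≤ n := by
  induction n generalizing j with
  | zero => exact i.elim0
  | succ n ih =>
    have hj := h.nonneg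
    rw [← Fin.cons_self_tail g, isOddLukFrom_cons_iff hj] at h
    induction i using Fin.cases with
    | zero => have := h.2.le_length; simp only [Fin.val_zero, add_zero]; omega
    | succ i => have := ih h.2 i; simp only [Fin.tail, Fin.val_succ] at this ⊢; omega

variable (t u : ℝ) (κ : ℕ → ℝ)

noncomputable def stepWeight (c : ℕ) (x : ℤ) : ℝ :=
  if 2 ≤ c then κ (c / 2) else downWeight t u x

noncomputable def lukWeight (j : ℤ) (g : Fin n → ℕ) : ℝ :=
  ∏ i, stepWeight t u κ (g i) (j + lukHeight g i)

lemma lukWeight_cons (j : ℤ) (c : ℕ) (g : Fin n → ℕ) :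
    lukWeight t u κ j (Fin.cons c g : Fin (n + 1) → ℕ) =
      stepWeight t u κ c j * lukWeight t u κ (j + c - 1) g := by
  simp only [lukWeight, Fin.prod_univ_succ, Fin.cons_zero, Fin.cons_succ, Fin.val_zero,
    Fin.val_succ, lukHeight_cons_succ, lukHeight_zero, add_zero]
  congr 1
  refine prod_congr rfl fun i _ => ?_
  ring_nf

variable (n) in
noncomputable def oddLukFrom (j : ℤ) : Finset (Fin n → ℕ) :=
  (Fintype.piFinset fun _ => range (n + 1)).filter (IsOddLukFrom j)

lemma mem_oddLukFrom : g ∈ oddLukFrom n j ↔ (∀ i, g i ≤ n) ∧ IsOddLukFrom j g := by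
  simp [oddLukFrom]

noncomputable def lukSum (n : ℕ) (j : ℤ) : ℝ :=
  ∑ g ∈ oddLukFrom n j, lukWeight t u κ j g

lemma lukSum_zero_length (j : ℤ) : lukSum t u κ 0 j = if j = 0 then 1 else 0 := by
  have hvalid (j : ℤ) (g : Fin 0 → ℕ) : IsOddLukFrom j g ↔ j = 0 := by
    refine ⟨fun h => by simpa [lukHeight] using h.2.2, ?_⟩
    rintro rfl
    exact ⟨finZeroElim, fun m _ => by simp [lukHeight], by simp [lukHeight]⟩
  by_cases hj : j = 0 <;> simp [lukSum, oddLukFrom, lukWeight, hvalid, hj]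

lemma lukSum_of_neg (hj : j < 0) : lukSum t u κ n j = 0 :=
  sum_eq_zero fun _ hg => absurd (mem_oddLukFrom.1 hg).2.nonneg (not_le.2 hj)

lemma lukSum_of_length_lt (hj : (n : ℤ) < j) : lukSum t u κ n j = 0 :=
  sum_eq_zero fun _ hg => absurd (mem_oddLukFrom.1 hg).2.le_length (not_le.2 hj)

lemma lukSum_succ_eq_sum_first_step (hj : 0 ≤ j) : lukSum t u κ (n + 1) j =
    ∑ c ∈ (range (n + 2)).filter Even, stepWeight t u κ c j * lukSum t u κ n (j + c - 1) := by
  simp only [lukSum, mul_sum]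
  rw [sum_sigma']
  refine sum_bij' (fun g _ => ⟨g 0, Fin.tail g⟩) (fun p _ => Fin.cons p.1 p.2) ?_ ?_ ?_ ?_ ?_
  · intro g hg
    obtain ⟨hbound, hvalid⟩ := mem_oddLukFrom.1 hg
    rw [← Fin.cons_self_tail g, isOddLukFrom_cons_iff hj] at hvalid
    simp only [mem_sigma, mem_filter, mem_range, mem_oddLukFrom]
    refine ⟨⟨by have := hbound 0; omega, hvalid.1⟩, fun i => ?_, hvalid.2⟩
    have := hvalid.2.apply_add_le i
    omega
  · rintro ⟨c, g⟩ hp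
    simp only [mem_sigma, mem_filter, mem_range, mem_oddLukFrom] at hp
    refine mem_oddLukFrom.2 ⟨Fin.forall_fin_succ.2 ⟨?_, fun i => ?_⟩,
      (isOddLukFrom_cons_iff hj c g).2 ⟨hp.1.2, hp.2.2⟩⟩
    · simp only [Fin.cons_zero]; omega
    · simp only [Fin.cons_succ]; have := hp.2.1 i; omega
  · intro g _
    exact Fin.cons_self_tail g
  · rintro ⟨c, g⟩ _
    simp
  · intro g _
    conv_lhs => rw [← Fin.cons_self_tail g]
    exact lukWeight_cons t u κ j _ _

lemma lukSum_succ (hj : 0 ≤ j) {R : ℕ} (hR : n ≤ R) :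
    lukSum t u κ (n + 1) j = downWeight t u j * lukSum t u κ n (j - 1) +
      ∑ s ∈ range R, κ (s + 1) * lukSum t u κ n (j + 2 * s + 1) := by
  have hextend : (range (n + 2)).filter Even ⊆ (range (2 * (R + 1))).filter Even :=
    filter_subset_filter _ (range_subset_range.2 (by omega))
  rw [lukSum_succ_eq_sum_first_step t u κ hj, sum_subset hextend, sum_filter_even_range,
    sum_range_succ']
  · rw [add_comm]
    congr 1
    · simp [stepWeight]
    · refine sum_congr rfl fun s _ => ?_
      rw [stepWeight, if_pos (by omega), show 2 * (s + 1) / 2 = s + 1 by omega]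
      push_cast
      ring_nf
  · intro c hc hc'
    simp only [mem_filter, mem_range] at hc hc'
    have hc2 : n + 2 ≤ c := by by_contra h; exact hc' ⟨by omega, hc.2⟩
    rw [lukSum_of_length_lt t u κ (by omega), mul_zero]

lemma sum_oddLukPaths_eq_lukSum (n : ℕ) :
    ∑ f ∈ oddLukPaths n, ∏ i : Fin n,
        (if 2 ≤ (f i : ℕ) then κ ((f i : ℕ) / 2)
         else if pathHeightE f (i : ℕ) % 2 = 1 then
           u + (((pathHeightE f (i : ℕ) - 1) / 2 : ℤ) : ℝ)
         else t + ((pathHeightE f (i : ℕ) / 2 : ℤ) : ℝ)) = lukSum t u κ n 0 := by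
  have hvalid (f : Fin n → Fin (n + 1)) :
      IsOddLukPathE f ↔ IsOddLukFrom 0 (fun i => (f i : ℕ)) := by
    have hodd (c : ℕ) : Odd ((c : ℤ) - 1) ↔ Even c := by simp
    simp only [IsOddLukPathE, IsOddLukFrom, hodd, zero_add]
    rfl
  refine sum_bij (fun f _ i => (f i : ℕ)) (fun f hf => ?_) (fun f _ f' _ h => ?_)
    (fun g hg => ?_) (fun f _ => ?_)
  · simp only [oddLukPaths, mem_filter, mem_univ, true_and] at hf
    exact mem_oddLukFrom.2 ⟨fun i => Nat.lt_succ_iff.1 (f i).isLt, (hvalid f).1 hf⟩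
  · funext i
    exact Fin.ext (congrFun h i)
  · obtain ⟨hbound, hg⟩ := mem_oddLukFrom.1 hg
    refine ⟨fun i => ⟨g i, Nat.lt_succ_of_le (hbound i)⟩, ?_, rfl⟩
    simpa [oddLukPaths, hvalid] using hg
  · simp only [lukWeight, stepWeight, downWeight, zero_add]
    rfl

end Paths


section Series

variable (t u : ℝ) {κ b : ℕ → ℝ}

variable (b) in
noncomputable def levelSeries (h : ℕ) : ℝ⟦X⟧ :=
  mk fun N => if Even N then levelCoeff t u b h (N / 2) else 0

lemma coeff_levelSeries_succ (hb : IsExpSeq κ b) (h : ℕ) {R M : ℕ} (hM : M ≤ 2 * R + 1) :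
    coeff M (levelSeries t u b (h + 1)) = coeff M (levelSeries t u b h) + ∑ s ∈ range R,
      κ (s + 1) * descentWeight t u h (2 * s + 1) *
        coeff M (X ^ (2 * s + 2) * levelSeries t u b (h + 2 * s + 2)) := by
  simp only [levelSeries, coeff_mk, coeff_X_pow_mul']
  rcases Nat.even_or_odd' M with ⟨n, rfl | rfl⟩
  · rw [if_pos (even_two_mul n), if_pos (even_two_mul n), Nat.mul_div_cancel_left n two_pos,
      levelCoeff_succ t u hb, ← sum_subset (range_subset_range.2 (show n ≤ R by omega))]
    · congr 1
      refine sum_congr rfl fun s hs => ?_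
      have hs : s < n := mem_range.1 hs
      rw [if_pos (by omega), if_pos ⟨n - s - 1, by omega⟩,
        show (2 * n - (2 * s + 2)) / 2 = n - s - 1 by omega]
    · intro s _ hs
      rw [mem_range] at hs
      rw [if_neg (by omega), mul_zero]
  · rw [if_neg (Nat.not_even_two_mul_add_one n), if_neg (Nat.not_even_two_mul_add_one n), zero_add]
    refine (sum_eq_zero fun s _ => ?_).symm
    split_ifs with h1 h2
    · exact absurd (Nat.even_iff.1 h2) (by omega)
    · rw [mul_zero]
    · rw [mul_zero]

lemma coeff_X_pow_mul_levelSeries_succ (hb : IsExpSeq κ b) (h r : ℕ) {R M : ℕ}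
    (hM : M ≤ 2 * R + 1) :
    coeff M (X ^ r * levelSeries t u b (h + 1)) = coeff M (X ^ r * levelSeries t u b h) +
      ∑ s ∈ range R, κ (s + 1) * descentWeight t u h (2 * s + 1) *
        coeff M (X ^ r * (X ^ (2 * s + 2) * levelSeries t u b (h + 2 * s + 2))) := by
  by_cases hr : r ≤ M
  · have := coeff_levelSeries_succ t u hb h (R := R) (M := M - r) (by omega)
    simpa only [coeff_X_pow_mul', if_pos hr] using this
  · simp [coeff_X_pow_mul', hr]

variable (κ) in
noncomputable def lukSeries (j : ℤ) : ℝ⟦X⟧ :=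
  mk fun n => lukSum t u κ n j

lemma lukSeries_of_neg {j : ℤ} (hj : j < 0) : lukSeries t u κ j = 0 := by
  ext n
  simp [lukSeries, lukSum_of_neg t u κ hj]

lemma coeff_succ_lukSeries_mul {j : ℤ} (hj : 0 ≤ j) (V : ℝ⟦X⟧) (N : ℕ) :
    coeff (N + 1) (lukSeries t u κ j * V) = lukSum t u κ 0 j * coeff (N + 1) V +
      downWeight t u j * coeff N (lukSeries t u κ (j - 1) * V) +
      ∑ s ∈ range N, κ (s + 1) * coeff N (lukSeries t u κ (j + 2 * s + 1) * V) := by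
  have hstep : ∀ x ∈ antidiagonal N, lukSum t u κ (x.1 + 1) j * coeff x.2 V =
      (downWeight t u j * lukSum t u κ x.1 (j - 1) +
        ∑ s ∈ range N, κ (s + 1) * lukSum t u κ x.1 (j + 2 * s + 1)) * coeff x.2 V :=
    fun x hx => by rw [lukSum_succ t u κ hj (R := N) (by have := mem_antidiagonal.1 hx; omega)]
  rw [coeff_mul, Nat.sum_antidiagonal_succ, add_assoc]
  simp only [lukSeries, coeff_mk, coeff_mul]
  rw [sum_congr rfl hstep]
  simp only [add_mul, sum_add_distrib, sum_mul, mul_sum, mul_assoc]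
  rw [sum_comm]

theorem lukSeries_mul_levelSeries_zero (hb : IsExpSeq κ b) (j : ℕ) :
    lukSeries t u κ j * levelSeries t u b 0 =
      C (descentWeight t u 0 j) * X ^ j * levelSeries t u b (j + 1) := by
  ext N
  induction N generalizing j with
  | zero =>
    rw [mul_assoc, coeff_C_mul, coeff_X_pow_mul', coeff_zero_eq_constantCoeff_apply, map_mul,
      ← coeff_zero_eq_constantCoeff_apply, ← coeff_zero_eq_constantCoeff_apply]
    rcases j with _ | j <;>
      simp [lukSeries, levelSeries, lukSum_zero_length, levelCoeff, descentWeight,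
        Nat.cast_add_one_ne_zero]
  | succ N ih =>
    have hdown : lukSum t u κ 0 j * coeff (N + 1) (levelSeries t u b 0) +
        downWeight t u j * coeff N (lukSeries t u κ (j - 1) * levelSeries t u b 0) =
        descentWeight t u 0 j * coeff (N + 1) (X ^ j * levelSeries t u b j) := by
      cases j with
      | zero => simp [lukSum_zero_length, lukSeries_of_neg, descentWeight]
      | succ j =>
        rw [lukSum_zero_length, if_neg (by omega), zero_mul, zero_add,
          show ((j + 1 : ℕ) : ℤ) - 1 = j by push_cast; ring, ih j, mul_assoc, coeff_C_mul,
          descentWeight_succ, coeff_succ_X_pow_succ_mul]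
        push_cast
        ring_nf
    have hup : ∀ s ∈ range N,
        κ (s + 1) * coeff N (lukSeries t u κ (j + 2 * s + 1) * levelSeries t u b 0) =
        descentWeight t u 0 j * (κ (s + 1) * descentWeight t u j (2 * s + 1) *
          coeff (N + 1) (X ^ j * (X ^ (2 * s + 2) * levelSeries t u b (j + 2 * s + 2)))) := by
      intro s _
      have hih := ih (j + 2 * s + 1)
      have hsplit := descentWeight_add t u 0 j (2 * s + 1)
      push_cast at hih
      rw [zero_add, ← add_assoc] at hsplit
      rw [hih, mul_assoc, coeff_C_mul, ← mul_assoc (X ^ j), ← pow_add,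
        show j + (2 * s + 2) = j + 2 * s + 1 + 1 by ring, coeff_succ_X_pow_succ_mul, hsplit,
        show j + 2 * s + 1 + 1 = j + 2 * s + 2 by ring]
      ring
    rw [coeff_succ_lukSeries_mul t u (by positivity), hdown, sum_congr rfl hup, ← mul_sum,
      ← mul_add, mul_assoc, coeff_C_mul,
      coeff_X_pow_mul_levelSeries_succ t u hb j j (R := N) (M := N + 1) (by omega)]

end Series

section Moments

lemma X_mul_derivative_levelSeries_zero (t u : ℝ) (b : ℕ → ℝ) :
    X * d⁄dX ℝ (levelSeries t u b 0) = C (2 * t) * (levelSeries t u b 1 - levelSeries t u b 0) := by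
  ext N
  cases N with
  | zero => simp [levelSeries, levelCoeff]
  | succ N =>
    rw [coeff_succ_X_mul, coeff_derivative, coeff_C_mul, map_sub]
    simp only [levelSeries, coeff_mk]
    rcases Nat.even_or_odd' (N + 1) with ⟨n, hn | hn⟩
    · have hN : (N : ℝ) + 1 = 2 * n := by exact_mod_cast hn
      rw [hn, if_pos (even_two_mul n), if_pos (even_two_mul n),
        Nat.mul_div_cancel_left n two_pos, hN, levelCoeff_zero_left, levelCoeff_one_left]
      linear_combination 2 * pochEval u n * b n * natCast_mul_pochEval t n
    · simp [hn]

variable {t u : ℝ} {a κ m : ℕ → ℝ}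

lemma coeffSeries_eq_levelSeries_zero (ht : ∀ i : ℕ, t + i ≠ 0) (hu : ∀ i : ℕ, u + i ≠ 0)
    (h1 : fexp (evenSeries κ) = coeffSeriesTU t u a) :
    coeffSeries a = levelSeries t u (fun n => coeff (2 * n) (fexp (evenSeries κ))) 0 := by
  ext N
  simp only [coeffSeries, levelSeries, coeff_mk, levelCoeff_zero_left, h1, coeffSeriesTU]
  rcases Nat.even_or_odd' N with ⟨n, rfl | rfl⟩
  · rcases n with _ | n
    · simp
    · have htn := pochEval_ne_zero ht (n + 1)
      have hun := pochEval_ne_zero hu (n + 1)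
      simp only [if_neg (show 2 * (n + 1) ≠ 0 by omega), if_pos (even_two_mul _),
        if_pos (show 2 * (n + 1) % 2 = 0 by omega), Nat.mul_div_cancel_left _ two_pos]
      field_simp
  · simp

theorem moment_eq_lukSum (ht : ∀ i : ℕ, t + i ≠ 0) (hu : ∀ i : ℕ, u + i ≠ 0)
    (h1 : fexp (evenSeries κ) = coeffSeriesTU t u a)
    (h2 : fexp (C t * evenSeries m) = coeffSeries a) (k : ℕ) (hk : 1 ≤ k) :
    m k = lukSum t u κ (2 * k) 0 := by
  set b : ℕ → ℝ := fun n => coeff (2 * n) (fexp (evenSeries κ))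
  have hG : lukSeries t u κ 0 * levelSeries t u b 0 = levelSeries t u b 1 := by
    simpa [descentWeight] using
      lukSeries_mul_levelSeries_zero t u (isExpSeq_coeff_fexp_evenSeries κ) 0
  have hG0 : levelSeries t u b 0 ≠ 0 := fun h => by
    simpa [b, levelSeries, levelCoeff, fexp] using congrArg (coeff 0) h
  have hdG : d⁄dX ℝ (levelSeries t u b 0) =
      d⁄dX ℝ (C t * evenSeries m) * levelSeries t u b 0 := by
    rw [← show coeffSeries a = levelSeries t u b 0 from coeffSeries_eq_levelSeries_zero ht hu h1,
      ← h2, derivative_fexp (by simp)]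
  have key : X * d⁄dX ℝ (C t * evenSeries m) = C (2 * t) * (lukSeries t u κ 0 - 1) := by
    refine mul_right_cancel₀ hG0 ?_
    rw [mul_assoc, ← hdG, X_mul_derivative_levelSeries_zero, ← hG]
    ring
  obtain ⟨k, rfl⟩ : ∃ k', k = k' + 1 := ⟨k - 1, by omega⟩
  have hcoeff := congrArg (coeff (2 * k + 1 + 1)) key
  rw [coeff_succ_X_mul, coeff_derivative, coeff_C_mul, coeff_evenSeries, coeff_C_mul, map_sub,
    coeff_one, lukSeries, coeff_mk, if_pos (by omega), if_neg (by omega),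
    show (2 * k + 1 + 1) / 2 = k + 1 by omega, show 2 * k + 1 + 1 = 2 * (k + 1) by ring] at hcoeff
  have ht0 : t ≠ 0 := by simpa using ht 0
  push_cast at hcoeff
  field_simp at hcoeff
  refine mul_right_cancel₀ (show (k : ℝ) * 2 + 1 + 1 ≠ 0 by positivity) ?_
  linear_combination hcoeff

end Moments

end Lukasiewicz

/-- For an up step `f i = 2s`, so `s = (f i)/2`; a step is a down step iff `f i < 2`. -/
theorem moments_via_lukasiewicz_paths (t u : ℝ)
    (ht : ∀ i : ℕ, t + i ≠ 0) (hu : ∀ i : ℕ, u + i ≠ 0)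
    (a κ m : ℕ → ℝ)
    (h1 : fexp (evenSeries κ) = coeffSeriesTU t u a)
    (h2 : fexp (PowerSeries.C t * evenSeries m) = coeffSeries a) :
    ∀ k : ℕ, 1 ≤ k →
      m k = ∑ f ∈ oddLukPaths (2 * k), ∏ i : Fin (2 * k),
        (if 2 ≤ (f i : ℕ) then κ ((f i : ℕ) / 2)
         else if pathHeightE f (i : ℕ) % 2 = 1 then
           u + (((pathHeightE f (i : ℕ) - 1) / 2 : ℤ) : ℝ)
         else t + ((pathHeightE f (i : ℕ) / 2 : ℤ) : ℝ)) := by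
  intro k hk
  rw [Lukasiewicz.sum_oddLukPaths_eq_lukSum]
  exact Lukasiewicz.moment_eq_lukSum ht hu h1 h2 k hk
end
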